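/- arXiv:1403.6787 — 5 statements merged into one kernel-verified Lean document; each statement's English description precedes it below -/
import Mathlib

section
/- Let G₀ be an ℓ-group (locally compact totally disconnected group), C and D closed subgroups, and ι : C → D^ a closed embedding into the Pontryagin dual of D. Let χ ∈ D^ and let f be a smooth function on G₀ satisfying f(cd) = f(c) χ(d) ⟨ι(c), d⟩ for all c ∈ C, d ∈ D. Then the restriction of f to C is compactly supported. -/
open MeasureTheory

/-- **Compact support from oscillation** (Lemma 2.5, first part, of the paper).
Let `G₀` be an ℓ-group (locally compact totally disconnected group), `C`, `D` closed
subgroups and `ι : C → D^` a closed embedding into the character group of `D` (continuous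
unitary characters `D → Circle`, with the compact-open topology).  Let `χ ∈ D^` and let
`f` be a smooth function on `G₀` (right-invariant under a compact open subgroup) with
`f(cd) = f(c) χ(d) ⟨ι(c), d⟩` for all `c ∈ C`, `d ∈ D`.  Then `f|_C` is compactly
supported. -/
theorem stmt1 (G₀ : Type*) [Group G₀] [TopologicalSpace G₀] [IsTopologicalGroup G₀]
    [LocallyCompactSpace G₀] [TotallyDisconnectedSpace G₀]
    (C D : Subgroup G₀) (hC : IsClosed (C : Set G₀)) (hD : IsClosed (D : Set G₀))
    (ι : C → ContinuousMonoidHom D Circle) (hι : Topology.IsClosedEmbedding ι)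
    (χ : ContinuousMonoidHom D Circle)
    (f : G₀ → ℂ)
    (K₀ : Subgroup G₀) (hK₀o : IsOpen (K₀ : Set G₀)) (hK₀c : IsCompact (K₀ : Set G₀))
    (hsmooth : ∀ (g : G₀) (u : G₀), u ∈ K₀ → f (g * u) = f g)
    (hf : ∀ (c : C) (d : D), f ((c : G₀) * (d : G₀)) = f (c : G₀) * (χ d : ℂ) * (ι c d : ℂ)) :
    ∃ Ω : Set G₀, IsCompact Ω ∧ ∀ c : C, f (c : G₀) ≠ 0 → (c : G₀) ∈ Ω := by
  classical
  set N : Set D := {d : D | (d : G₀) ∈ K₀} with hN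
  have hNopen : IsOpen N := hK₀o.preimage continuous_subtype_val
  have hNone : (1 : D) ∈ N := K₀.one_mem
  set ρ : D → Circle := fun d => (χ d)⁻¹ with hρ
  have hρcont : Continuous ρ := χ.continuous.inv
  have hρone : ρ 1 = 1 := by simp [hρ]
  -- pointwise closed set
  set T : Set (D → Circle) :=
    {g | (∀ x y, g (x * y) = g x * g y) ∧ ∀ d ∈ N, g d = ρ d} with hT
  have hTclosed : IsClosed T := by
    have h1 : IsClosed {g : D → Circle | ∀ x y, g (x * y) = g x * g y} := by
      rw [Set.setOf_forall]
      refine isClosed_iInter fun x => ?_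
      rw [Set.setOf_forall]
      refine isClosed_iInter fun y => ?_
      exact isClosed_eq (continuous_apply (x * y)) ((continuous_apply x).mul (continuous_apply y))
    have h2 : IsClosed {g : D → Circle | ∀ d ∈ N, g d = ρ d} := by
      rw [Set.setOf_forall]
      refine isClosed_iInter fun d => ?_
      by_cases hd : d ∈ N
      · simpa [hd] using isClosed_eq (continuous_apply d) (continuous_const (y := ρ d))
      · simp [hd]
    exact (h1.inter h2)
  -- every element of T gives rise to a continuous monoid hom
  have mk_one : ∀ g ∈ T, g 1 = 1 := by
    intro g hg
    have h := hg.1 1 1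
    rw [mul_one] at h
    exact left_eq_mul.mp h
  have mk_cont : ∀ g ∈ T, Continuous g := by
    intro g hg
    have hevent : g =ᶠ[nhds (1 : D)] ρ :=
      Filter.eventuallyEq_of_mem (hNopen.mem_nhds hNone) fun d hd => hg.2 d hd
    have hcont1 : ContinuousAt g 1 := hρcont.continuousAt.congr hevent.symm
    let φ : D →* Circle := { toFun := g, map_one' := mk_one g hg, map_mul' := hg.1 }
    exact continuous_of_continuousAt_one φ hcont1
  -- the corresponding set of continuous maps
  set S_cm : Set C(D, Circle) :=
    {g | (∀ x y, g (x * y) = g x * g y) ∧ ∀ d ∈ N, g d = ρ d} with hS_cm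
  have himg : ContinuousMap.toFun '' S_cm = T := by
    ext g
    constructor
    · rintro ⟨g₀, hg₀, rfl⟩
      exact hg₀
    · intro hg
      exact ⟨⟨g, mk_cont g hg⟩, hg, rfl⟩
  -- equicontinuity
  have hequi : Equicontinuous ((↑) : S_cm → D → Circle) := by
    let F : S_cm → (D →* Circle) := fun g =>
      { toFun := g.1, map_one' := mk_one g.1 g.2, map_mul' := g.2.1 }
    have h1 : EquicontinuousAt ((↑) ∘ F) 1 := by
      intro U hU
      have hball : UniformSpace.ball (1 : Circle) U ∈ nhds (1 : Circle) :=
        UniformSpace.ball_mem_nhds 1 hU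
      have h2 : Filter.Tendsto ρ (nhds 1) (nhds 1) := by
        have h := hρcont.tendsto (1 : D)
        rwa [hρone] at h
      filter_upwards [Filter.inter_mem (hNopen.mem_nhds hNone) (h2 hball)] with d hd g
      have e1 : (g : C(D, Circle)) 1 = 1 := mk_one _ g.2
      have e2 : (g : C(D, Circle)) d = ρ d := g.2.2 d hd.1
      show ((g : C(D, Circle)) 1, (g : C(D, Circle)) d) ∈ U
      rw [e1, e2]
      exact hd.2
    exact equicontinuous_of_equicontinuousAt_one F h1
  have hScm : IsCompact S_cm :=
    ArzelaAscoli.isCompact_of_equicontinuous S_cm (himg ▸ hTclosed.isCompact) hequi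
  -- pull back to ContinuousMonoidHom
  set S : Set (ContinuousMonoidHom D Circle) :=
    ContinuousMonoidHom.toContinuousMap ⁻¹' S_cm with hS
  have himg2 : ContinuousMonoidHom.toContinuousMap '' S = S_cm := by
    ext g
    constructor
    · rintro ⟨g₀, hg₀, rfl⟩
      exact hg₀
    · intro hg
      refine ⟨⟨{ toFun := ⇑g, map_one' := mk_one ⇑g hg, map_mul' := hg.1 }, g.continuous⟩, ?_, ?_⟩
      · exact hg
      · rfl
  have hScompact : IsCompact S := by
    have := (ContinuousMonoidHom.isInducing_toContinuousMap D Circle).isCompact_iff (s := S)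
    rw [himg2] at this
    exact this.mpr hScm
  -- conclude
  refine ⟨Subtype.val '' (ι ⁻¹' S), (hι.isCompact_preimage hScompact).image continuous_subtype_val,
    fun c hc => ?_⟩
  refine ⟨c, ?_, rfl⟩
  show ContinuousMonoidHom.toContinuousMap (ι c) ∈ S_cm
  refine ⟨fun x y => map_mul (ι c) x y, fun d hd => ?_⟩
  have h0 := (hf c d).symm.trans (hsmooth (c : G₀) (d : G₀) hd)
  have h1 : f (c : G₀) * ((χ d : ℂ) * (ι c d : ℂ)) = f (c : G₀) * 1 := by
    rw [mul_one, ← mul_assoc]; exact h0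
  have h2 : (χ d : ℂ) * (ι c d : ℂ) = 1 := mul_left_cancel₀ hc h1
  have h3 : (ι c d : ℂ) = ((χ d : Circle) : ℂ)⁻¹ :=
    eq_inv_of_mul_eq_one_left (by rw [mul_comm]; exact h2)
  have h4 : ((ι c d : Circle) : ℂ) = (((χ d)⁻¹ : Circle) : ℂ) := by
    rw [Circle.coe_inv]; exact h3
  exact Subtype.ext h4
end

section
/- Let F be a p-adic field and for 0 < s < 1/2 and integers n ≥ 1 consider I = ∫ ∏_{i=1}^n |t_{2i}|^{-3/2+s} ∏_{i=2}^n |t_{2i-1}|^{-1/2+s} ∏_{i=2}^{2n} d^*t_i, taken over the region {(t₂,…,t_{2n}) ∈ (F^×)^{2n−1} : 1 ≪ |t₂| ≪ |t₃| ≪ … ≪ |t_{2n}|} (meaning |t₂| ≥ c, |t_{i+1}| ≥ c|t_i| for a fixed constant c > 0). Then I < ∞. -/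
set_option linter.unnecessarySimpa false


open MeasureTheory

section Auxiliary

open ENNReal

lemma lintegral_pi_prod_aux {α : Type*} [MeasurableSpace α] (μ : Measure α) [SigmaFinite μ] :
    ∀ (n : ℕ) (f : Fin n → α → ℝ≥0∞), (∀ i, Measurable (f i)) →
      ∫⁻ v, ∏ i, f i (v i) ∂(Measure.pi fun _ : Fin n => μ) = ∏ i, ∫⁻ x, f i x ∂μ := by
  intro n
  induction n with
  | zero =>
      intro f _
      simp [Measure.pi_of_empty]
  | succ n ih =>
      intro f hf
      have hF : Measurable fun v : Fin (n+1) → α => ∏ i, f i (v i) :=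
        Finset.measurable_prod _ fun i _ => (hf i).comp (measurable_pi_apply i)
      have hmp := (measurePreserving_piFinSuccAbove (fun _ : Fin (n+1) => μ) 0).symm
      rw [← hmp.lintegral_comp hF]
      simp only [MeasurableEquiv.piFinSuccAbove_symm_apply, Fin.insertNthEquiv,
        Equiv.coe_fn_mk, Fin.insertNth_zero, Fin.prod_univ_succ, Fin.cons_zero, Fin.cons_succ,
        Fin.zero_succAbove, cast_eq]
      rw [lintegral_prod_mul (f := f 0) (g := fun w : Fin n → α => ∏ i, f i.succ (w i))
        (hf 0).aemeasurable
        (Finset.measurable_prod _ fun i _ =>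
          (hf i.succ).comp (measurable_pi_apply i)).aemeasurable]
      rw [ih (fun j => f j.succ) (fun j => hf _)]

lemma shell_integral_finite (p : ℕ) [Fact p.Prime]
    [MeasurableSpace ℚ_[p]ˣ] [BorelSpace ℚ_[p]ˣ]
    (μ : Measure ℚ_[p]ˣ) [μ.IsHaarMeasure] {a e : ℝ} (ha : 0 < a) (he : e < 0) :
    ∫⁻ t in {t : ℚ_[p]ˣ | a ≤ ‖(t : ℚ_[p])‖}, ENNReal.ofReal (‖(t : ℚ_[p])‖ ^ e) ∂μ < ⊤ := by
  have hp1 : 1 < (p : ℝ) := by exact_mod_cast (Fact.out : p.Prime).one_lt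
  have hp0 : (0 : ℝ) < p := lt_trans one_pos hp1
  have hcont : Continuous fun t : ℚ_[p]ˣ => ‖(t : ℚ_[p])‖ :=
    continuous_norm.comp Units.continuous_val
  set A : ℤ → Set ℚ_[p]ˣ := fun k => {t | ‖(t : ℚ_[p])‖ = (p : ℝ) ^ k} with hA
  have hAmeas : ∀ k, MeasurableSet (A k) := fun k =>
    hcont.measurable (measurableSet_singleton ((p : ℝ) ^ k))
  haveI : CompactSpace (Metric.sphere (0 : ℚ_[p]) 1) :=
    isCompact_iff_compactSpace.mp (isCompact_sphere 0 1)
  have hsne : ∀ x : Metric.sphere (0 : ℚ_[p]) 1, (x : ℚ_[p]) ≠ 0 := by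
    intro x
    have hx : ‖(x : ℚ_[p])‖ = 1 := mem_sphere_zero_iff_norm.mp x.2
    intro h0; rw [h0] at hx; simp at hx
  set h : Metric.sphere (0 : ℚ_[p]) 1 → ℚ_[p]ˣ := fun x => Units.mk0 (x : ℚ_[p]) (hsne x) with hh
  have hhcont : Continuous h := by
    apply Units.continuous_iff.mpr
    constructor
    · exact continuous_subtype_val
    · exact continuous_subtype_val.inv₀ hsne
  have hA0 : IsCompact (A 0) := by
    have : A 0 = Set.range h := by
      ext t
      constructor
      · intro ht
        have ht' : ‖(t : ℚ_[p])‖ = 1 := by simpa [hA] using ht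
        exact ⟨⟨(t : ℚ_[p]), mem_sphere_zero_iff_norm.mpr ht'⟩, Units.ext rfl⟩
      · rintro ⟨x, rfl⟩
        simpa [hA, h] using mem_sphere_zero_iff_norm.mp x.2
    rw [this]
    exact isCompact_range hhcont
  have hC : μ (A 0) < ⊤ := hA0.measure_lt_top
  have hπ : ((p : ℚ_[p]) ≠ 0) := by
    exact_mod_cast Nat.cast_ne_zero.mpr (Fact.out : p.Prime).ne_zero
  set π : ℚ_[p]ˣ := Units.mk0 (p : ℚ_[p]) hπ with hπdef
  have hshell : ∀ k : ℤ, μ (A k) = μ (A 0) := by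
    intro k
    have hkey : A k = ((π ^ k) * ·) ⁻¹' (A 0) := by
      ext t
      simp only [A, Set.mem_preimage, Set.mem_setOf_eq, Units.val_mul, norm_mul]
      have hnp : ‖((π ^ k : ℚ_[p]ˣ) : ℚ_[p])‖ = ((p : ℝ) ^ k)⁻¹ := by
        rw [Units.val_zpow_eq_zpow_val, hπdef, Units.val_mk0, norm_zpow, Padic.norm_p,
          inv_zpow]
      rw [hnp, zpow_zero]
      have hpk : (0:ℝ) < (p:ℝ) ^ k := zpow_pos hp0 k
      constructor
      · intro ht; rw [ht]; field_simp
      · intro ht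
        have := ht
        field_simp at this
        linarith [this]
    rw [hkey, measure_preimage_mul]
  have hshellint : ∀ k : ℤ, ∫⁻ t in A k, ENNReal.ofReal (‖(t : ℚ_[p])‖ ^ e) ∂μ
      = ENNReal.ofReal (((p : ℝ) ^ k) ^ e) * μ (A 0) := by
    intro k
    rw [setLIntegral_congr_fun (hAmeas k)
      (fun t (ht : ‖(t : ℚ_[p])‖ = (p:ℝ) ^ k) => by rw [ht])]
    rw [setLIntegral_const, hshell k]
  set k₀ : ℤ := ⌈Real.logb p a⌉ with hk₀
  have hsub : {t : ℚ_[p]ˣ | a ≤ ‖(t : ℚ_[p])‖} ⊆ ⋃ m : ℕ, A (k₀ + m) := by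
    intro t ht
    have htne : ((t : ℚ_[p]) ≠ 0) := Units.ne_zero t
    have hval : ‖(t : ℚ_[p])‖ = (p : ℝ) ^ (-(t : ℚ_[p]).valuation) :=
      Padic.norm_eq_zpow_neg_valuation htne
    set k : ℤ := -(t : ℚ_[p]).valuation with hk
    have hak : a ≤ (p : ℝ) ^ k := by rw [← hval]; exact ht
    have hk0k : k₀ ≤ k := by
      rw [hk₀]
      apply Int.ceil_le.mpr
      have : a ≤ (p : ℝ) ^ ((k : ℤ) : ℝ) := by
        rw [Real.rpow_intCast]; exact hak
      exact (Real.logb_le_iff_le_rpow hp1 ha).mpr this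
    refine Set.mem_iUnion.mpr ⟨(k - k₀).toNat, ?_⟩
    have : k₀ + ((k - k₀).toNat : ℤ) = k := by
      rw [Int.toNat_of_nonneg (sub_nonneg.mpr hk0k)]; ring
    rw [this]
    exact hval
  set r : ℝ≥0∞ := ENNReal.ofReal ((p : ℝ) ^ e) with hr
  have hrlt : r < 1 :=
    ENNReal.ofReal_lt_one.mpr (Real.rpow_lt_one_of_one_lt_of_neg hp1 he)
  have hterm : ∀ m : ℕ, ENNReal.ofReal (((p : ℝ) ^ (k₀ + (m : ℤ))) ^ e)
      = ENNReal.ofReal (((p : ℝ) ^ k₀) ^ e) * r ^ m := by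
    intro m
    rw [hr, ← ENNReal.ofReal_pow (Real.rpow_nonneg hp0.le e), ← ENNReal.ofReal_mul
      (Real.rpow_nonneg (zpow_pos hp0 k₀).le e)]
    congr 1
    rw [← Real.rpow_natCast ((p:ℝ) ^ e) m, ← Real.rpow_intCast (p:ℝ) k₀,
      ← Real.rpow_intCast (p:ℝ) (k₀ + m), ← Real.rpow_mul hp0.le, ← Real.rpow_mul hp0.le,
      ← Real.rpow_mul hp0.le, ← Real.rpow_add hp0]
    congr 1
    push_cast
    ring
  calc ∫⁻ t in {t : ℚ_[p]ˣ | a ≤ ‖(t : ℚ_[p])‖}, ENNReal.ofReal (‖(t : ℚ_[p])‖ ^ e) ∂μ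
      ≤ ∫⁻ t in ⋃ m : ℕ, A (k₀ + m), ENNReal.ofReal (‖(t : ℚ_[p])‖ ^ e) ∂μ :=
        lintegral_mono_set hsub
    _ ≤ ∑' m : ℕ, ∫⁻ t in A (k₀ + m), ENNReal.ofReal (‖(t : ℚ_[p])‖ ^ e) ∂μ :=
        lintegral_iUnion_le _ _
    _ = ∑' m : ℕ, (ENNReal.ofReal (((p : ℝ) ^ k₀) ^ e) * μ (A 0)) * r ^ m := by
        refine tsum_congr fun m => ?_
        rw [hshellint, hterm m]
        ring
    _ = (ENNReal.ofReal (((p : ℝ) ^ k₀) ^ e) * μ (A 0)) * ∑' m : ℕ, r ^ m :=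
        ENNReal.tsum_mul_left
    _ < ⊤ := by
        apply ENNReal.mul_lt_top
        · exact ENNReal.mul_lt_top ENNReal.ofReal_lt_top hC
        · rw [ENNReal.tsum_geometric]
          exact ENNReal.inv_lt_top.mpr (tsub_pos_of_lt hrlt)

end Auxiliary

/-- **Convergence of the integral underlying the transform `tranMWL`** (Theorem 4.1 of
the paper).  For a `p`-adic field `F`, `0 < s < 1/2`, `n ≥ 1` and a constant `c > 0`, the
integral `∫ ∏_{i=1}^n |t_{2i}|^{-3/2+s} ∏_{i=2}^n |t_{2i-1}|^{-1/2+s} ∏ d^*t_i` over the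
region `1 ≪ |t₂| ≪ |t₃| ≪ … ≪ |t_{2n}|` (i.e. `|t₂| ≥ c` and `|t_{k+1}| ≥ c |t_k|`) is
finite.  Coordinates: `v j` is `t_{j+2}`, so even `j` carries the exponent `s - 3/2` and
odd `j` the exponent `s - 1/2`; `μ` is a Haar measure on `F^× = ℚ_[p]ˣ`. -/
theorem stmt12 (p : ℕ) [Fact p.Prime]
    [MeasurableSpace ℚ_[p]ˣ] [BorelSpace ℚ_[p]ˣ]
    (μ : Measure ℚ_[p]ˣ) [μ.IsHaarMeasure] [SigmaFinite μ]
    (n : ℕ) (hn : 1 ≤ n) (s : ℝ) (hs0 : 0 < s) (hs : s < 1/2)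
    (c : ℝ) (hc : 0 < c) :
    (∫⁻ v in {v : Fin (2*n-1) → ℚ_[p]ˣ |
        c ≤ ‖((v ⟨0, by omega⟩ : ℚ_[p]ˣ) : ℚ_[p])‖ ∧
        ∀ (j : ℕ) (hj : j + 1 < 2*n-1),
          c * ‖((v ⟨j, by omega⟩ : ℚ_[p]ˣ) : ℚ_[p])‖ ≤
            ‖((v ⟨j+1, hj⟩ : ℚ_[p]ˣ) : ℚ_[p])‖},
      ∏ j : Fin (2*n-1),
        ENNReal.ofReal (‖((v j : ℚ_[p]ˣ) : ℚ_[p])‖ ^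
          (if (j : ℕ) % 2 = 0 then s - 3/2 else s - 1/2))
      ∂(Measure.pi fun _ : Fin (2*n-1) => μ)) < ⊤ := by
  classical
  set S : Fin (2*n-1) → Set ℚ_[p]ˣ :=
    fun j => {t : ℚ_[p]ˣ | c ^ ((j : ℕ) + 1) ≤ ‖(t : ℚ_[p])‖} with hSdef
  set g : Fin (2*n-1) → ℚ_[p]ˣ → ENNReal :=
    fun j t => ENNReal.ofReal (‖(t : ℚ_[p])‖ ^
      (if (j : ℕ) % 2 = 0 then s - 3/2 else s - 1/2)) with hgdef
  have hcont : Continuous fun t : ℚ_[p]ˣ => ‖(t : ℚ_[p])‖ :=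
    continuous_norm.comp Units.continuous_val
  have hSmeas : ∀ j, MeasurableSet (S j) := fun j =>
    hcont.measurable measurableSet_Ici
  have hgm : ∀ j, Measurable (g j) := by
    intro j
    apply ENNReal.measurable_ofReal.comp
    apply Continuous.measurable
    rw [continuous_iff_continuousAt]
    intro t
    have houter : ContinuousAt
        (fun x : ℝ => x ^ (if (j : ℕ) % 2 = 0 then s - 3/2 else s - 1/2)) ‖(t : ℚ_[p])‖ :=
      Real.continuousAt_rpow_const _ _
        (Or.inl (norm_pos_iff.mpr (Units.ne_zero t)).ne')
    exact ContinuousAt.comp (x := t) houter hcont.continuousAt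
  have hsub : {v : Fin (2*n-1) → ℚ_[p]ˣ |
        c ≤ ‖((v ⟨0, by omega⟩ : ℚ_[p]ˣ) : ℚ_[p])‖ ∧
        ∀ (j : ℕ) (hj : j + 1 < 2*n-1),
          c * ‖((v ⟨j, by omega⟩ : ℚ_[p]ˣ) : ℚ_[p])‖ ≤
            ‖((v ⟨j+1, hj⟩ : ℚ_[p]ˣ) : ℚ_[p])‖} ⊆ Set.pi Set.univ S := by
    rintro v ⟨h0, hstep⟩
    have key : ∀ (m : ℕ) (hm : m < 2*n-1), c ^ (m+1) ≤ ‖((v ⟨m, hm⟩ : ℚ_[p]ˣ) : ℚ_[p])‖ := by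
      intro m
      induction m with
      | zero => intro hm; simpa [pow_one] using h0
      | succ m ih =>
          intro hm
          have hm' : m < 2*n-1 := by omega
          have h1 := hstep m hm
          calc c ^ (m+1+1) = c * c ^ (m+1) := by ring
            _ ≤ c * ‖((v ⟨m, hm'⟩ : ℚ_[p]ˣ) : ℚ_[p])‖ :=
                mul_le_mul_of_nonneg_left (ih hm') hc.le
            _ ≤ ‖((v ⟨m+1, hm⟩ : ℚ_[p]ˣ) : ℚ_[p])‖ := h1
    intro j _
    have hj := key j.1 j.2
    simpa [hSdef] using hj
  refine lt_of_le_of_lt (lintegral_mono_set hsub) ?_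
  rw [← lintegral_indicator (MeasurableSet.univ_pi hSmeas)]
  have hpoint : ∀ v : Fin (2*n-1) → ℚ_[p]ˣ,
      Set.indicator (Set.pi Set.univ S) (fun v => ∏ j, g j (v j)) v
        = ∏ j, (S j).indicator (g j) (v j) := by
    intro v
    by_cases hv : v ∈ Set.pi Set.univ S
    · rw [Set.indicator_of_mem hv]
      exact Finset.prod_congr rfl fun j _ =>
        (Set.indicator_of_mem (hv j (Set.mem_univ j)) _).symm
    · rw [Set.indicator_of_notMem hv]
      obtain ⟨j, hj⟩ : ∃ j, v j ∉ S j := by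
        by_contra hcon
        push_neg at hcon
        exact hv fun j _ => hcon j
      exact (Finset.prod_eq_zero (Finset.mem_univ j)
        (Set.indicator_of_notMem hj _)).symm
  rw [lintegral_congr hpoint]
  rw [lintegral_pi_prod_aux μ _ _ (fun j => (hgm j).indicator (hSmeas j))]
  have hfin : ∀ j : Fin (2*n-1), (∫⁻ t, (S j).indicator (g j) t ∂μ) < ⊤ := by
    intro j
    rw [lintegral_indicator (hSmeas j)]
    refine shell_integral_finite p μ (pow_pos hc ((j : ℕ) + 1)) ?_
    split_ifs <;> linarith
  exact ENNReal.prod_lt_top (fun j _ => hfin j)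
end

section
/- With notation as in the paper (G = Sp_{2n}, H the centralizer of m(E) in G, m : GL_{2n} → M the Siegel Levi embedding, w_{2n,M} = m(w_{2n})): the normalizer of H in G equals H ∪ w_{2n,M} H. Moreover, letting w^† = diag(I_n, [[0, I_n],[−I_n, 0]], I_n) · m([[0, I_n],[w_n, 0]]), the element w^† normalizes H, and w^† ∈ H if and only if n is even. -/
open Matrix

variable (p : ℕ) [Fact p.Prime]

/-- The symplectic form `J = antidiag(w_{2n}, −w_{2n})` on `F^{4n}`. -/
noncomputable def Jmat (n : ℕ) : Matrix (Fin (4*n)) (Fin (4*n)) ℚ_[p] := fun i j =>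
  if (i : ℕ) < 2*n ∧ 2*n ≤ (j : ℕ) ∧ (i : ℕ) + (j : ℕ) = 4*n - 1 then 1
  else if 2*n ≤ (i : ℕ) ∧ (j : ℕ) < 2*n ∧ (i : ℕ) + (j : ℕ) = 4*n - 1 then -1
  else 0

/-- `G = Sp_{2n}(F) = {g ∈ GL_{4n} : gᵗ J g = J}` (as a set of matrices). -/
noncomputable def SpSet (n : ℕ) : Set (Matrix (Fin (4*n)) (Fin (4*n)) ℚ_[p]) :=
  {g | gᵀ * Jmat p n * g = Jmat p n}

/-- `m(E) = diag(E, E^*)`, `E = diag(1,−1,…,1,−1) ∈ GL_{2n}`. -/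
noncomputable def mEMat (n : ℕ) : Matrix (Fin (4*n)) (Fin (4*n)) ℚ_[p] :=
  Matrix.diagonal (fun k =>
    if (k : ℕ) < 2*n then (if (k : ℕ) % 2 = 0 then 1 else -1)
    else (if (k : ℕ) % 2 = 0 then -1 else 1))

/-- `H`, the centralizer of `m(E)` in `G`; it is isomorphic to `Sp_n × Sp_n`. -/
noncomputable def HSet (n : ℕ) : Set (Matrix (Fin (4*n)) (Fin (4*n)) ℚ_[p]) :=
  {g | g ∈ SpSet p n ∧ g * mEMat p n = mEMat p n * g}

/-- `w_{2n,M} = m(w_{2n}) = diag(w_{2n}, w_{2n})`. -/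
noncomputable def wMmat (n : ℕ) : Matrix (Fin (4*n)) (Fin (4*n)) ℚ_[p] := fun i j =>
  if (i : ℕ) < 2*n ∧ (j : ℕ) < 2*n ∧ (i : ℕ) + (j : ℕ) = 2*n - 1 then 1
  else if 2*n ≤ (i : ℕ) ∧ 2*n ≤ (j : ℕ) ∧ (i : ℕ) + (j : ℕ) = 6*n - 1 then 1
  else 0

/-- The element `w† = diag(I_n, [[0,I_n],[−I_n,0]], I_n) · m([[0,I_n],[w_n,0]])`, written
out in `n × n` blocks as `[[0,I_n,0,0],[0,0,0,w_n],[−w_n,0,0,0],[0,0,I_n,0]]`. -/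
noncomputable def wDag (n : ℕ) : Matrix (Fin (4*n)) (Fin (4*n)) ℚ_[p] := fun i j =>
  if (i : ℕ) < n ∧ (j : ℕ) = (i : ℕ) + n then 1
  else if n ≤ (i : ℕ) ∧ (i : ℕ) < 2*n ∧ 3*n ≤ (j : ℕ) ∧ (i : ℕ) + (j : ℕ) = 5*n - 1 then 1
  else if 2*n ≤ (i : ℕ) ∧ (i : ℕ) < 3*n ∧ (i : ℕ) + (j : ℕ) = 3*n - 1 then -1
  else if 3*n ≤ (i : ℕ) ∧ (j : ℕ) + n = (i : ℕ) then 1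
  else 0

noncomputable def sg (n i : ℕ) : ℚ_[p] := if i < 2*n then 1 else -1
noncomputable def dE (n k : ℕ) : ℚ_[p] := if (k < 2*n ↔ k % 2 = 0) then 1 else -1
def sM (n i : ℕ) : ℕ := if i < 2*n then 2*n-1-i else 6*n-1-i
def sD (n i : ℕ) : ℕ :=
  if i < n then i+n else if i < 2*n then 5*n-1-i else if i < 3*n then 3*n-1-i else i-n
noncomputable def cD (n i : ℕ) : ℚ_[p] := if 2*n ≤ i ∧ i < 3*n then -1 else 1
def sDi (n j : ℕ) : ℕ :=
  if j < n then 3*n-1-j else if j < 2*n then j-n else if j < 3*n then j+n else 5*n-1-j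
noncomputable def cDi (n j : ℕ) : ℚ_[p] := if j < n then -1 else 1

section rows
variable {n : ℕ}

lemma J_row (i k : Fin (4*n)) :
    Jmat p n i k = if (k : ℕ) = 4*n-1-(i : ℕ) then sg p n i else 0 := by
  have hi := i.isLt; have hk := k.isLt
  unfold Jmat sg
  split_ifs <;> first | rfl | (exfalso; omega)

lemma J_col (j k : Fin (4*n)) :
    Jmat p n k j = if (k : ℕ) = 4*n-1-(j : ℕ) then -(sg p n j) else 0 := by
  have hj := j.isLt; have hk := k.isLt
  unfold Jmat sg
  split_ifs <;> first | rfl | (exfalso; omega) | (norm_num; done)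

lemma mE_diag : mEMat p n = Matrix.diagonal (fun k : Fin (4*n) => dE p n (k : ℕ)) := by
  unfold mEMat dE
  refine congrArg Matrix.diagonal (funext fun k => ?_)
  split_ifs <;> first | rfl | (exfalso; omega)

lemma wM_row (i k : Fin (4*n)) :
    wMmat p n i k = if (k : ℕ) = sM n (i : ℕ) then 1 else 0 := by
  have hi := i.isLt; have hk := k.isLt
  unfold wMmat sM
  split_ifs <;> first | rfl | (exfalso; omega)

lemma wM_col (j k : Fin (4*n)) :
    wMmat p n k j = if (k : ℕ) = sM n (j : ℕ) then 1 else 0 := by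
  have hj := j.isLt; have hk := k.isLt
  unfold wMmat sM
  split_ifs <;> first | rfl | (exfalso; omega)

lemma wD_row (i k : Fin (4*n)) :
    wDag p n i k = if (k : ℕ) = sD n (i : ℕ) then cD p n (i : ℕ) else 0 := by
  have hi := i.isLt; have hk := k.isLt
  unfold wDag sD cD
  split_ifs <;> first | rfl | (exfalso; omega)

lemma wD_col (j k : Fin (4*n)) :
    wDag p n k j = if (k : ℕ) = sDi n (j : ℕ) then cDi p n (j : ℕ) else 0 := by
  have hj := j.isLt; have hk := k.isLt
  unfold wDag sDi cDi
  split_ifs <;> first | rfl | (exfalso; omega)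

lemma sM_lt (i : Fin (4*n)) : sM n (i : ℕ) < 4*n := by
  have hi := i.isLt; unfold sM; split_ifs <;> omega

lemma sD_lt (i : Fin (4*n)) : sD n (i : ℕ) < 4*n := by
  have hi := i.isLt; unfold sD; split_ifs <;> omega

lemma sDi_lt (i : Fin (4*n)) : sDi n (i : ℕ) < 4*n := by
  have hi := i.isLt; unfold sDi; split_ifs <;> omega

lemma sJ_lt (i : Fin (4*n)) : 4*n-1-(i : ℕ) < 4*n := by
  have hi := i.isLt; omega

end rows

section helpers

variable {m : ℕ}

lemma mul_apply_rowNat (A B : Matrix (Fin m) (Fin m) ℚ_[p]) (i j : Fin m)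
    (t : ℕ) (ht : t < m) (c : ℚ_[p])
    (h : ∀ k : Fin m, A i k = if (k : ℕ) = t then c else 0) :
    (A * B) i j = c * B ⟨t, ht⟩ j := by
  rw [Matrix.mul_apply, Finset.sum_eq_single (⟨t, ht⟩ : Fin m)]
  · rw [h]; simp
  · intro b _ hb
    rw [h]
    have : (b : ℕ) ≠ t := fun hc => hb (Fin.ext hc)
    simp [this]
  · intro hb; exact absurd (Finset.mem_univ _) hb

lemma mul_apply_colNat (A B : Matrix (Fin m) (Fin m) ℚ_[p]) (i j : Fin m)
    (t : ℕ) (ht : t < m) (c : ℚ_[p])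
    (h : ∀ k : Fin m, B k j = if (k : ℕ) = t then c else 0) :
    (A * B) i j = A i ⟨t, ht⟩ * c := by
  rw [Matrix.mul_apply, Finset.sum_eq_single (⟨t, ht⟩ : Fin m)]
  · rw [h]; simp
  · intro b _ hb
    rw [h]
    have : (b : ℕ) ≠ t := fun hc => hb (Fin.ext hc)
    simp [this]
  · intro hb; exact absurd (Finset.mem_univ _) hb

/-- single-entry matrix -/
noncomputable def Emat (a b : Fin m) (c : ℚ_[p]) : Matrix (Fin m) (Fin m) ℚ_[p] :=
  fun i j => if i = a ∧ j = b then c else 0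

lemma Emat_mul_apply (a b : Fin m) (c : ℚ_[p]) (M : Matrix (Fin m) (Fin m) ℚ_[p])
    (i j : Fin m) : (Emat p a b c * M) i j = if i = a then c * M b j else 0 := by
  rw [Matrix.mul_apply]
  by_cases hia : i = a
  · subst hia
    simp only [Emat, true_and, ite_mul, zero_mul]
    rw [Finset.sum_ite_eq' Finset.univ b (fun k => c * M k j)]
    simp
  · simp [Emat, hia]

lemma mul_Emat_apply (a b : Fin m) (c : ℚ_[p]) (M : Matrix (Fin m) (Fin m) ℚ_[p])
    (i j : Fin m) : (M * Emat p a b c) i j = if j = b then M i a * c else 0 := by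
  rw [Matrix.mul_apply]
  by_cases hjb : j = b
  · subst hjb
    simp only [Emat, and_true, mul_ite, mul_zero]
    rw [Finset.sum_ite_eq' Finset.univ a (fun k => M i k * c)]
    simp
  · simp [Emat, hjb]

lemma Emat_transpose (a b : Fin m) (c : ℚ_[p]) :
    (Emat p a b c)ᵀ = Emat p b a c := by
  ext i j; simp [Emat, Matrix.transpose_apply, and_comm]

lemma Emat_add (a b : Fin m) (c d : ℚ_[p]) :
    Emat p a b c + Emat p a b d = Emat p a b (c + d) := by
  ext i j; simp only [Matrix.add_apply, Emat]; split_ifs <;> simp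

lemma Emat_zero (a b : Fin m) : Emat p a b (0 : ℚ_[p]) = 0 := by
  ext i j; simp [Emat]

lemma Emat_mul_Emat (a b d e : Fin m) (c f : ℚ_[p]) :
    Emat p a b c * Emat p d e f = if b = d then Emat p a e (c * f) else 0 := by
  ext i j
  rw [Emat_mul_apply]
  by_cases hbd : b = d
  · subst hbd
    simp only [if_true, Emat]
    split_ifs <;> simp_all
  · simp only [hbd, if_false, Emat, Matrix.zero_apply]
    split_ifs <;> simp_all

lemma Emat_mul_diagonal (a b : Fin m) (c : ℚ_[p]) (d : Fin m → ℚ_[p]) :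
    Emat p a b c * Matrix.diagonal d = Emat p a b (c * d b) := by
  ext i j
  rw [Matrix.mul_diagonal]
  simp only [Emat]
  split_ifs with h
  · rw [h.2]
  · simp

lemma diagonal_mul_Emat (a b : Fin m) (c : ℚ_[p]) (d : Fin m → ℚ_[p]) :
    Matrix.diagonal d * Emat p a b c = Emat p a b (d a * c) := by
  ext i j
  rw [Matrix.diagonal_mul]
  simp only [Emat]
  split_ifs with h
  · rw [h.1]
  · simp

end helpers

section products
variable {n : ℕ}

lemma J_mul_J : Jmat p n * Jmat p n = -1 := by
  ext i j
  rw [mul_apply_rowNat p _ _ i j (4*n-1-(i:ℕ)) (sJ_lt i) (sg p n i) (J_row p i),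
    J_row]
  have hi := i.isLt; have hj := j.isLt
  unfold sg
  simp only [Matrix.neg_apply, Matrix.one_apply, Fin.ext_iff]
  split_ifs <;> first | rfl | (exfalso; omega) | (norm_num; done)

lemma mE_mul_mE : mEMat p n * mEMat p n = 1 := by
  rw [mE_diag, Matrix.diagonal_mul_diagonal, ← Matrix.diagonal_one]
  refine congrArg Matrix.diagonal (funext fun k => ?_)
  unfold dE
  split_ifs <;> norm_num

lemma mE_Sp : (mEMat p n)ᵀ * Jmat p n * mEMat p n = Jmat p n := by
  rw [mE_diag, Matrix.diagonal_transpose]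
  ext i j
  rw [Matrix.mul_diagonal, Matrix.diagonal_mul, J_row]
  have hi := i.isLt; have hj := j.isLt
  unfold dE sg
  split_ifs <;> first | rfl | (exfalso; omega) | (norm_num; done)

lemma wM_mul_wM : wMmat p n * wMmat p n = 1 := by
  ext i j
  rw [mul_apply_rowNat p _ _ i j (sM n i) (sM_lt i) 1 (wM_row p i), wM_row]
  have hi := i.isLt; have hj := j.isLt
  simp only [Matrix.one_apply, Fin.ext_iff]
  unfold sM
  by_cases h1 : (i:ℕ) < 2*n <;> by_cases h2 : (j:ℕ) < 2*n <;>
    simp only [h1, h2, if_true, if_false] <;>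
    first | rfl | (exfalso; omega) | (norm_num; done) |
      (split_ifs <;> first | rfl | (exfalso; omega) | (norm_num; done))

lemma wM_Sp : (wMmat p n)ᵀ * Jmat p n * wMmat p n = Jmat p n := by
  ext i j
  rw [mul_apply_colNat p _ _ i j (sM n j) (sM_lt j) 1 (wM_col p j)]
  rw [mul_apply_rowNat p _ _ i _ (sM n i) (sM_lt i) 1
    (fun k => by rw [Matrix.transpose_apply]; exact wM_col p i k)]
  rw [J_row]
  have hi := i.isLt; have hj := j.isLt
  conv_rhs => rw [J_row]
  unfold sg sM
  by_cases h1 : (i:ℕ) < 2*n <;> by_cases h2 : (j:ℕ) < 2*n <;>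
    simp only [h1, h2, if_true, if_false] <;>
    first | rfl | (exfalso; omega) | (norm_num; done) |
      (split_ifs <;> first | rfl | (exfalso; omega) | (norm_num; done))

lemma wM_mE : wMmat p n * mEMat p n = -(mEMat p n * wMmat p n) := by
  rw [mE_diag]
  ext i j
  rw [Matrix.mul_diagonal, Matrix.neg_apply, Matrix.diagonal_mul, wM_row]
  have hi := i.isLt; have hj := j.isLt
  unfold dE sM
  by_cases h1 : (i:ℕ) < 2*n <;> by_cases h2 : (j:ℕ) < 2*n <;>
    simp only [h1, h2, if_true, if_false, true_iff, iff_true, false_iff, iff_false] <;>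
    first | rfl | (exfalso; omega) | (norm_num; done) |
      (split_ifs <;> first | rfl | (exfalso; omega) | (norm_num; done))

lemma wD_Sp : (wDag p n)ᵀ * Jmat p n * wDag p n = Jmat p n := by
  ext i j
  rw [mul_apply_colNat p _ _ i j (sDi n j) (sDi_lt j) (cDi p n j) (wD_col p j)]
  rw [mul_apply_rowNat p _ _ i _ (sDi n i) (sDi_lt i) (cDi p n i)
    (fun k => by rw [Matrix.transpose_apply]; exact wD_col p i k)]
  rw [J_row]
  have hi := i.isLt; have hj := j.isLt
  conv_rhs => rw [J_row]
  unfold sg sDi cDi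
  by_cases h1 : (i:ℕ) < n <;> by_cases h2 : (i:ℕ) < 2*n <;> by_cases h3 : (i:ℕ) < 3*n <;>
  by_cases h4 : (j:ℕ) < n <;> by_cases h5 : (j:ℕ) < 2*n <;> by_cases h6 : (j:ℕ) < 3*n <;>
    simp only [h1, h2, h3, h4, h5, h6, if_true, if_false] <;>
    first | rfl | (exfalso; omega) | (norm_num; done) |
      (split_ifs <;> first | rfl | (exfalso; omega) | (norm_num; done))

lemma wD_mE_even (hev : n % 2 = 0) :
    wDag p n * mEMat p n = mEMat p n * wDag p n := by
  rw [mE_diag]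
  ext i j
  rw [Matrix.mul_diagonal, Matrix.diagonal_mul, wD_row]
  have hi := i.isLt; have hj := j.isLt
  unfold dE sD cD
  by_cases h1 : (i:ℕ) < n <;> by_cases h2 : (i:ℕ) < 2*n <;> by_cases h3 : (i:ℕ) < 3*n <;>
    simp only [h1, h2, h3, if_true, if_false, true_iff, iff_true, false_iff, iff_false] <;>
    first | rfl | (exfalso; omega) | (norm_num; done) |
      (split_ifs <;> first | rfl | (exfalso; omega) | (norm_num; done))

lemma wD_mE_odd (hod : n % 2 = 1) :
    wDag p n * mEMat p n = -(mEMat p n * wDag p n) := by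
  rw [mE_diag]
  ext i j
  rw [Matrix.mul_diagonal, Matrix.neg_apply, Matrix.diagonal_mul, wD_row]
  have hi := i.isLt; have hj := j.isLt
  unfold dE sD cD
  by_cases h1 : (i:ℕ) < n <;> by_cases h2 : (i:ℕ) < 2*n <;> by_cases h3 : (i:ℕ) < 3*n <;>
    simp only [h1, h2, h3, if_true, if_false, true_iff, iff_true, false_iff, iff_false] <;>
    first | rfl | (exfalso; omega) | (norm_num; done) |
      (split_ifs <;> first | rfl | (exfalso; omega) | (norm_num; done))

end products

section trans
variable {n : ℕ}

/-- the `J`-partner index -/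
def finσJ (i : Fin (4*n)) : Fin (4*n) := ⟨4*n-1-(i:ℕ), sJ_lt i⟩

lemma finσJ_ne (i : Fin (4*n)) : i ≠ finσJ i := by
  have hi := i.isLt
  simp only [finσJ, Fin.ext_iff, ne_eq]
  omega

lemma sg_sq (k : ℕ) : sg p n k * sg p n k = 1 := by
  unfold sg; split_ifs <;> norm_num

lemma dE_sq (k : ℕ) : dE p n k * dE p n k = 1 := by
  unfold dE; split_ifs <;> norm_num

lemma dE_sJ (i : Fin (4*n)) : dE p n ((finσJ i : Fin (4*n)) : ℕ) = dE p n (i : ℕ) := by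
  have hi := i.isLt
  simp only [finσJ]
  unfold dE
  split_ifs <;> first | rfl | (exfalso; omega)

lemma Emat_mul_J (a b : Fin (4*n)) (c : ℚ_[p]) :
    Emat p a b c * Jmat p n = Emat p a (finσJ b) (c * sg p n b) := by
  ext i j
  rw [Emat_mul_apply, J_row]
  simp only [Emat, finσJ, Fin.ext_iff]
  have hj := j.isLt; have hb := b.isLt
  split_ifs <;> first | rfl | (exfalso; omega) | tauto | (norm_num; done)

lemma J_mul_Emat (a b : Fin (4*n)) (c : ℚ_[p]) :
    Jmat p n * Emat p a b c = Emat p (finσJ a) b (-(sg p n a) * c) := by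
  ext i j
  rw [mul_Emat_apply, J_col]
  simp only [Emat, finσJ, Fin.ext_iff]
  have hi := i.isLt; have ha := a.isLt
  split_ifs <;> first | rfl | (exfalso; omega) | tauto | (norm_num; done)

lemma Emat_mul_mE (a b : Fin (4*n)) (c : ℚ_[p]) :
    Emat p a b c * mEMat p n = Emat p a b (c * dE p n (b : ℕ)) := by
  rw [mE_diag, Emat_mul_diagonal]

lemma mE_mul_Emat (a b : Fin (4*n)) (c : ℚ_[p]) :
    mEMat p n * Emat p a b c = Emat p a b (dE p n (a : ℕ) * c) := by
  rw [mE_diag, diagonal_mul_Emat]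

lemma T1_mem (i : Fin (4*n)) : (1 + Emat p i (finσJ i) 1) ∈ HSet p n := by
  constructor
  · show (1 + Emat p i (finσJ i) 1)ᵀ * Jmat p n * (1 + Emat p i (finσJ i) 1) = Jmat p n
    rw [Matrix.transpose_add, Matrix.transpose_one, Emat_transpose]
    have expand : (1 + Emat p (finσJ i) i 1) * Jmat p n * (1 + Emat p i (finσJ i) 1)
        = Jmat p n + Emat p (finσJ i) i 1 * Jmat p n
          + Jmat p n * Emat p i (finσJ i) 1
          + (Emat p (finσJ i) i 1 * Jmat p n) * Emat p i (finσJ i) 1 := by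
      noncomm_ring
    rw [expand, Emat_mul_J, J_mul_Emat]
    rw [Emat_mul_Emat, if_neg (Ne.symm (finσJ_ne i))]
    rw [add_zero, add_assoc, Emat_add]
    have : (1 : ℚ_[p]) * sg p n (i:ℕ) + -(sg p n (i:ℕ)) * 1 = 0 := by ring
    rw [this, Emat_zero, add_zero]
  · show (1 + Emat p i (finσJ i) 1) * mEMat p n = mEMat p n * (1 + Emat p i (finσJ i) 1)
    rw [mul_add, add_mul, mul_one, one_mul, Emat_mul_mE, mE_mul_Emat, dE_sJ,
      one_mul, mul_one]

lemma T2_mem (i j : Fin (4*n)) (hne : i ≠ j) (hne' : (j : ℕ) ≠ 4*n-1-(i:ℕ))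
    (hd : dE p n (i : ℕ) = dE p n (j : ℕ)) :
    (1 + (Emat p i (finσJ j) 1 + Emat p j (finσJ i) (sg p n i * sg p n j)))
      ∈ HSet p n := by
  set ε : ℚ_[p] := sg p n i * sg p n j with hε
  have hij : (i : ℕ) ≠ (j : ℕ) := fun h => hne (Fin.ext h)
  have hi := i.isLt; have hj := j.isLt
  constructor
  · show _ * Jmat p n * _ = Jmat p n
    rw [Matrix.transpose_add, Matrix.transpose_one, Matrix.transpose_add,
      Emat_transpose, Emat_transpose]
    have expand : (1 + (Emat p (finσJ j) i 1 + Emat p (finσJ i) j ε)) * Jmat p n *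
        (1 + (Emat p i (finσJ j) 1 + Emat p j (finσJ i) ε))
        = Jmat p n
          + (Emat p (finσJ j) i 1 * Jmat p n + Jmat p n * Emat p j (finσJ i) ε)
          + (Emat p (finσJ i) j ε * Jmat p n + Jmat p n * Emat p i (finσJ j) 1)
          + ((Emat p (finσJ j) i 1 * Jmat p n) * Emat p i (finσJ j) 1
            + (Emat p (finσJ j) i 1 * Jmat p n) * Emat p j (finσJ i) ε
            + (Emat p (finσJ i) j ε * Jmat p n) * Emat p i (finσJ j) 1
            + (Emat p (finσJ i) j ε * Jmat p n) * Emat p j (finσJ i) ε) := by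
      noncomm_ring
    rw [expand]
    rw [Emat_mul_J, Emat_mul_J, J_mul_Emat, J_mul_Emat]
    rw [Emat_mul_Emat, Emat_mul_Emat, Emat_mul_Emat, Emat_mul_Emat]
    rw [if_neg (Ne.symm (finσJ_ne i)),
      if_neg (show (finσJ i : Fin (4*n)) ≠ j from
        fun h => hne' (by rw [← h]; rfl)),
      if_neg (show (finσJ j : Fin (4*n)) ≠ i from by
        simp only [finσJ, Fin.ext_iff, ne_eq]; omega),
      if_neg (Ne.symm (finσJ_ne j))]
    rw [Emat_add, Emat_add]
    have e1 : (1 : ℚ_[p]) * sg p n (i:ℕ) + -(sg p n (j:ℕ)) * ε = 0 := by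
      rw [hε, one_mul]
      linear_combination (-(sg p n (i:ℕ))) * sg_sq p (n := n) (j : ℕ)
    have e2 : ε * sg p n (j:ℕ) + -(sg p n (i:ℕ)) * 1 = 0 := by
      rw [hε, mul_one]
      linear_combination (sg p n (i:ℕ)) * sg_sq p (n := n) (j : ℕ)
    rw [e1, e2, Emat_zero, Emat_zero]
    simp
  · show _ * mEMat p n = mEMat p n * _
    rw [mul_add, add_mul, mul_one, one_mul, mul_add, add_mul]
    rw [Emat_mul_mE, Emat_mul_mE, mE_mul_Emat, mE_mul_Emat, dE_sJ, dE_sJ,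
      one_mul, mul_one, hd, mul_comm ε (dE p n (j:ℕ))]

end trans

section glue
variable {n : ℕ}

lemma sp_mul {a b : Matrix (Fin (4*n)) (Fin (4*n)) ℚ_[p]}
    (ha : a ∈ SpSet p n) (hb : b ∈ SpSet p n) : a * b ∈ SpSet p n := by
  have ha' : aᵀ * Jmat p n * a = Jmat p n := ha
  have hb' : bᵀ * Jmat p n * b = Jmat p n := hb
  show (a*b)ᵀ * Jmat p n * (a*b) = Jmat p n
  have key : (a*b)ᵀ * Jmat p n * (a*b) = bᵀ * (aᵀ * Jmat p n * a) * b := by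
    rw [Matrix.transpose_mul]; noncomm_ring
  rw [key, ha', hb']

lemma sp_inv_left {g : Matrix (Fin (4*n)) (Fin (4*n)) ℚ_[p]}
    (hg : g ∈ SpSet p n) : (-(Jmat p n * gᵀ * Jmat p n)) * g = 1 := by
  have hg' : gᵀ * Jmat p n * g = Jmat p n := hg
  have key : (-(Jmat p n * gᵀ * Jmat p n)) * g = -(Jmat p n * (gᵀ * Jmat p n * g)) := by
    noncomm_ring
  rw [key, hg', J_mul_J, neg_neg]

lemma conj_mem (g gi h : Matrix (Fin (4*n)) (Fin (4*n)) ℚ_[p])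
    (hg : g ∈ SpSet p n) (hgi : gi ∈ SpSet p n)
    (h1 : gi * g = 1) (h2 : g * gi = 1)
    (e : ℚ_[p]) (he : e * e = 1)
    (hgc : g * mEMat p n = e • (mEMat p n * g))
    (hgic : gi * mEMat p n = e • (mEMat p n * gi))
    (hh : h ∈ HSet p n) : g * h * gi ∈ HSet p n := by
  obtain ⟨hhs, hhc⟩ := hh
  have hhs' : hᵀ * Jmat p n * h = Jmat p n := hhs
  constructor
  · show (g*h*gi)ᵀ * Jmat p n * (g*h*gi) = Jmat p n
    have k1 : (g*h*gi)ᵀ * Jmat p n * (g*h*gi)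
        = giᵀ * (hᵀ * (gᵀ * Jmat p n * g) * h) * gi := by
      simp only [Matrix.transpose_mul]; noncomm_ring
    rw [k1, show gᵀ * Jmat p n * g = Jmat p n from hg, hhs']
    exact hgi
  · show (g*h*gi) * mEMat p n = mEMat p n * (g*h*gi)
    have k1 : (g*h*gi) * mEMat p n = g * h * (gi * mEMat p n) := by
      rw [Matrix.mul_assoc]
    rw [k1, hgic, mul_smul_comm]
    have k2 : g * h * (mEMat p n * gi) = g * (h * mEMat p n) * gi := by
      simp only [Matrix.mul_assoc]
    rw [k2, hhc]
    have k3 : g * (mEMat p n * h) * gi = (g * mEMat p n) * (h * gi) := by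
      simp only [Matrix.mul_assoc]
    rw [k3, hgc, smul_mul_assoc, smul_smul, he, one_smul]
    simp only [Matrix.mul_assoc]

lemma key_norm (g : Matrix (Fin (4*n)) (Fin (4*n)) ℚ_[p])
    (hg : g ∈ SpSet p n)
    (hc : g * mEMat p n = mEMat p n * g ∨ g * mEMat p n = -(mEMat p n * g)) :
    (∀ h ∈ HSet p n, ∃ h' ∈ HSet p n, g * h = h' * g) ∧
    (∀ h ∈ HSet p n, ∃ h' ∈ HSet p n, h * g = g * h') := by
  set gi := -(Jmat p n * gᵀ * Jmat p n) with hgidef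
  have h1 : gi * g = 1 := sp_inv_left p hg
  have h2 : g * gi = 1 := mul_eq_one_comm.mpr h1
  have hgi : gi ∈ SpSet p n := by
    show giᵀ * Jmat p n * gi = Jmat p n
    have k1 : giᵀ * Jmat p n * gi = giᵀ * (gᵀ * Jmat p n * g) * gi := by
      rw [show gᵀ * Jmat p n * g = Jmat p n from hg]
    have k2 : giᵀ * (gᵀ * Jmat p n * g) * gi = (g*gi)ᵀ * Jmat p n * (g*gi) := by
      simp only [Matrix.transpose_mul]; noncomm_ring
    rw [k1, k2, h2, Matrix.transpose_one, Matrix.one_mul, Matrix.mul_one]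
  obtain ⟨e, he, hgc⟩ :
      ∃ e : ℚ_[p], e * e = 1 ∧ g * mEMat p n = e • (mEMat p n * g) := by
    rcases hc with hc | hc
    · exact ⟨1, by norm_num, by rw [one_smul]; exact hc⟩
    · exact ⟨-1, by norm_num, by rw [neg_smul, one_smul]; exact hc⟩
  have hgic : gi * mEMat p n = e • (mEMat p n * gi) := by
    have k1 : gi * (g * mEMat p n) * gi = gi * (e • (mEMat p n * g)) * gi := by
      rw [hgc]
    have k2 : gi * (g * mEMat p n) * gi = (gi * g) * (mEMat p n * gi) := by
      simp only [Matrix.mul_assoc]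
    have k3 : gi * (e • (mEMat p n * g)) * gi
        = e • (gi * mEMat p n * (g * gi)) := by
      rw [mul_smul_comm, smul_mul_assoc]
      simp only [Matrix.mul_assoc]
    rw [k2, k3, h1, h2, Matrix.one_mul, Matrix.mul_one] at k1
    -- k1 : mE * gi = e • (gi * mE)
    have := congrArg (fun M => e • M) k1
    simp only [smul_smul, he, one_smul] at this
    exact this.symm
  constructor
  · intro h hh
    refine ⟨g * h * gi, conj_mem p g gi h hg hgi h1 h2 e he hgc hgic hh, ?_⟩
    calc g * h = g * h * 1 := by rw [Matrix.mul_one]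
    _ = g * h * (gi * g) := by rw [h1]
    _ = (g * h * gi) * g := by simp only [Matrix.mul_assoc]
  · intro h hh
    refine ⟨gi * h * g, conj_mem p gi g h hgi hg h2 h1 e he hgic hgc hh, ?_⟩
    calc h * g = 1 * (h * g) := by rw [Matrix.one_mul]
    _ = (g * gi) * (h * g) := by rw [h2]
    _ = g * (gi * h * g) := by simp only [Matrix.mul_assoc]

end glue

section hard
variable {n : ℕ}

lemma hard (hn : 1 ≤ n) (g : Matrix (Fin (4*n)) (Fin (4*n)) ℚ_[p])
    (hg : g ∈ SpSet p n)
    (c1 : ∀ h ∈ HSet p n, ∃ h' ∈ HSet p n, g * h = h' * g)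
    (c2 : ∀ h ∈ HSet p n, ∃ h' ∈ HSet p n, h * g = g * h') :
    g * mEMat p n = mEMat p n * g ∨ g * mEMat p n = -(mEMat p n * g) := by
  set gi := -(Jmat p n * gᵀ * Jmat p n) with hgidef
  have h1 : gi * g = 1 := sp_inv_left p hg
  have h2 : g * gi = 1 := mul_eq_one_comm.mpr h1
  set X := g * mEMat p n * gi with hXdef
  have hXg : X * g = g * mEMat p n := by
    calc X * g = g * mEMat p n * (gi * g) := by
          rw [hXdef]; simp only [Matrix.mul_assoc]
    _ = g * mEMat p n := by rw [h1, Matrix.mul_one]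
  -- X commutes with every element of H
  have hXh : ∀ h ∈ HSet p n, X * h = h * X := by
    intro h hh
    obtain ⟨h', hh', hcomm⟩ := c2 h hh
    have e1 : gi * h = h' * gi := by
      have k1 : gi * (h * g) * gi = gi * (g * h') * gi := by rw [hcomm]
      have k2 : gi * (h * g) * gi = gi * h * (g * gi) := by
        simp only [Matrix.mul_assoc]
      have k3 : gi * (g * h') * gi = (gi * g) * (h' * gi) := by
        simp only [Matrix.mul_assoc]
      rw [k2, k3, h1, h2, Matrix.mul_one, Matrix.one_mul] at k1
      exact k1
    obtain ⟨hs', hcomm'⟩ := hh'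
    calc X * h = g * mEMat p n * (gi * h) := by
          rw [hXdef]; simp only [Matrix.mul_assoc]
    _ = g * mEMat p n * (h' * gi) := by rw [e1]
    _ = g * (mEMat p n * h') * gi := by simp only [Matrix.mul_assoc]
    _ = g * (h' * mEMat p n) * gi := by rw [← hcomm']
    _ = (g * h') * (mEMat p n * gi) := by simp only [Matrix.mul_assoc]
    _ = (h * g) * (mEMat p n * gi) := by rw [← hcomm]
    _ = h * X := by rw [hXdef]; simp only [Matrix.mul_assoc]
  -- commutation with single-entry pieces of the transvections
  have hXE1 : ∀ i : Fin (4*n),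
      X * Emat p i (finσJ i) 1 = Emat p i (finσJ i) 1 * X := by
    intro i
    have hT := hXh (1 + Emat p i (finσJ i) 1) (T1_mem p i)
    rw [mul_add, add_mul, Matrix.mul_one, Matrix.one_mul] at hT
    exact add_left_cancel hT
  -- X is diagonal
  have hdiag : ∀ a b : Fin (4*n), a ≠ b → X a b = 0 := by
    intro a b hab
    have := congrFun (congrFun (hXE1 b) a) (finσJ b)
    rw [mul_Emat_apply, Emat_mul_apply] at this
    simpa [hab] using this
  have hEq1 : ∀ a : Fin (4*n), X a a = X (finσJ a) (finσJ a) := by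
    intro a
    have := congrFun (congrFun (hXE1 a) a) (finσJ a)
    rw [mul_Emat_apply, Emat_mul_apply] at this
    simpa using this
  -- equal diagonal entries on each eigenspace
  have hEq2 : ∀ a b : Fin (4*n), dE p n (a:ℕ) = dE p n (b:ℕ) → X a a = X b b := by
    intro a b hd
    by_cases hab : a = b
    · rw [hab]
    by_cases hab2 : (b:ℕ) = 4*n-1-(a:ℕ)
    · have : b = finσJ a := Fin.ext hab2
      rw [this]; exact hEq1 a
    have hT := hXh _ (T2_mem p a b hab hab2 hd)
    rw [mul_add, add_mul, Matrix.mul_one, Matrix.one_mul] at hT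
    have hE := add_left_cancel hT
    rw [mul_add, add_mul] at hE
    have := congrFun (congrFun hE a) (finσJ b)
    have hσ : (finσJ b : Fin (4*n)) ≠ finσJ a := by
      have ha := a.isLt; have hb := b.isLt
      have : (a:ℕ) ≠ (b:ℕ) := fun h => hab (Fin.ext h)
      simp only [finσJ, Fin.ext_iff, ne_eq]
      omega
    rw [Matrix.add_apply, Matrix.add_apply, mul_Emat_apply, mul_Emat_apply,
      Emat_mul_apply, Emat_mul_apply] at this
    rw [if_pos rfl, if_neg hσ, if_pos rfl, if_neg (fun h : a = b => hab h)] at this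
    rw [add_zero, add_zero, mul_one, one_mul] at this
    rw [this]
    exact (hEq1 b).symm
  -- X * X = 1
  have hX2 : X * X = 1 := by
    calc X * X = g * mEMat p n * (gi * g) * mEMat p n * gi := by
          rw [hXdef]; simp only [Matrix.mul_assoc]
    _ = g * (mEMat p n * mEMat p n) * gi := by
          rw [h1, Matrix.mul_one]; simp only [Matrix.mul_assoc]
    _ = g * gi := by rw [mE_mul_mE, Matrix.mul_one]
    _ = 1 := h2
  have h4n0 : 0 < 4*n := by omega
  have h4n1 : 1 < 4*n := by omega
  set i0 : Fin (4*n) := ⟨0, h4n0⟩ with hi0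
  set i1 : Fin (4*n) := ⟨1, h4n1⟩ with hi1
  have hdE0 : dE p n ((i0 : Fin (4*n)) : ℕ) = 1 := by
    show dE p n 0 = 1
    unfold dE; rw [if_pos (by omega)]
  have hdE1 : dE p n ((i1 : Fin (4*n)) : ℕ) = -1 := by
    show dE p n 1 = -1
    unfold dE; rw [if_neg (by omega)]
  have sq_entry : ∀ k : Fin (4*n), X k k * X k k = 1 := by
    intro k
    have := congrFun (congrFun hX2 k) k
    rw [Matrix.mul_apply, Finset.sum_eq_single k] at this
    · rw [this, Matrix.one_apply_eq]
    · intro b _ hb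
      rw [hdiag k b (Ne.symm hb), zero_mul]
    · intro hb; exact absurd (Finset.mem_univ _) hb
  have key' : ∀ k : Fin (4*n),
      X k k = if ((k:ℕ) < 2*n ↔ (k:ℕ) % 2 = 0) then X i0 i0 else X i1 i1 := by
    intro k
    by_cases hk : ((k:ℕ) < 2*n ↔ (k:ℕ) % 2 = 0)
    · rw [if_pos hk]
      refine hEq2 k i0 ?_
      rw [hdE0]; unfold dE; exact if_pos hk
    · rw [if_neg hk]
      refine hEq2 k i1 ?_
      rw [hdE1]; unfold dE; exact if_neg hk
  have hmEX : mEMat p n = gi * X * g := by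
    calc mEMat p n = 1 * mEMat p n * 1 := by rw [Matrix.one_mul, Matrix.mul_one]
    _ = (gi*g) * mEMat p n * (gi*g) := by rw [h1]
    _ = gi * (g * mEMat p n * gi) * g := by simp only [Matrix.mul_assoc]
    _ = gi * X * g := by rw [← hXdef]
  have hmE11 : mEMat p n i1 i1 = -1 := by
    rw [mE_diag, Matrix.diagonal_apply_eq, hdE1]
  have hmE00 : mEMat p n i0 i0 = 1 := by
    rw [mE_diag, Matrix.diagonal_apply_eq, hdE0]
  have hone : (1 : ℚ_[p]) ≠ -1 := by
    intro h
    have : (2 : ℚ_[p]) = 0 := by linear_combination h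
    norm_num at this
  rcases mul_self_eq_one_iff.mp (sq_entry i0) with ha | ha <;>
    rcases mul_self_eq_one_iff.mp (sq_entry i1) with hb | hb
  · -- X = 1 : contradiction
    exfalso
    have hX1 : X = 1 := by
      ext k l
      by_cases hkl : k = l
      · subst hkl
        rw [key' k, Matrix.one_apply_eq]
        split_ifs
        · exact ha
        · exact hb
      · rw [hdiag k l hkl, Matrix.one_apply_ne hkl]
    rw [hX1, Matrix.mul_one, h1] at hmEX
    have := congrFun (congrFun hmEX i1) i1
    rw [hmE11, Matrix.one_apply_eq] at this
    exact hone this.symm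
  · -- X = mE
    left
    have hXmE : X = mEMat p n := by
      rw [mE_diag]
      ext k l
      by_cases hkl : k = l
      · subst hkl
        rw [Matrix.diagonal_apply_eq, key' k]
        unfold dE
        split_ifs
        · exact ha
        · exact hb
      · rw [hdiag k l hkl, Matrix.diagonal_apply_ne _ hkl]
    calc g * mEMat p n = X * g := hXg.symm
    _ = mEMat p n * g := by rw [hXmE]
  · -- X = -mE
    right
    have hXmE : X = -(mEMat p n) := by
      rw [mE_diag]
      ext k l
      by_cases hkl : k = l
      · subst hkl
        rw [Matrix.neg_apply, Matrix.diagonal_apply_eq, key' k]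
        unfold dE
        split_ifs
        · exact ha
        · rw [neg_neg]; exact hb
      · rw [hdiag k l hkl, Matrix.neg_apply, Matrix.diagonal_apply_ne _ hkl,
          neg_zero]
    calc g * mEMat p n = X * g := hXg.symm
    _ = -(mEMat p n) * g := by rw [hXmE]
    _ = -(mEMat p n * g) := by rw [Matrix.neg_mul]
  · -- X = -1 : contradiction
    exfalso
    have hX1 : X = -1 := by
      ext k l
      by_cases hkl : k = l
      · subst hkl
        rw [key' k, Matrix.neg_apply, Matrix.one_apply_eq]
        split_ifs
        · exact ha
        · exact hb
      · rw [hdiag k l hkl, Matrix.neg_apply, Matrix.one_apply_ne hkl, neg_zero]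
    rw [hX1] at hmEX
    have k1 : gi * (-1 : Matrix (Fin (4*n)) (Fin (4*n)) ℚ_[p]) * g = -(gi * g) := by
      noncomm_ring
    rw [k1, h1] at hmEX
    have := congrFun (congrFun hmEX i0) i0
    rw [hmE00, Matrix.neg_apply, Matrix.one_apply_eq] at this
    exact hone this

end hard


/-- **The normalizer of `H = Sp_n × Sp_n` in `G = Sp_{2n}`** (§4, §5 of the paper):
`N_G(H) = H ∪ w_{2n,M} H`; moreover `w†` normalizes `H`, and `w† ∈ H` iff `n` is even. -/
theorem stmt17 (n : ℕ) (hn : 1 ≤ n) :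
    ({g | g ∈ SpSet p n ∧
        (∀ h ∈ HSet p n, ∃ h' ∈ HSet p n, g * h = h' * g) ∧
        (∀ h ∈ HSet p n, ∃ h' ∈ HSet p n, h * g = g * h')} =
      HSet p n ∪ {x | ∃ h ∈ HSet p n, x = wMmat p n * h}) ∧
    (wDag p n ∈ SpSet p n ∧
      (∀ h ∈ HSet p n, ∃ h' ∈ HSet p n, wDag p n * h = h' * wDag p n) ∧
      (∀ h ∈ HSet p n, ∃ h' ∈ HSet p n, h * wDag p n = wDag p n * h')) ∧
    (wDag p n ∈ HSet p n ↔ Even n) := by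
  refine ⟨?_, ?_, ?_⟩
  · -- normalizer = H ∪ wM H
    ext g
    simp only [Set.mem_setOf_eq, Set.mem_union]
    constructor
    · rintro ⟨hg, hc1, hc2⟩
      rcases hard p hn g hg hc1 hc2 with hc | hc
      · exact Or.inl ⟨hg, hc⟩
      · right
        refine ⟨wMmat p n * g, ⟨sp_mul p (wM_Sp p) hg, ?_⟩, ?_⟩
        · calc wMmat p n * g * mEMat p n
              = wMmat p n * (g * mEMat p n) := by rw [Matrix.mul_assoc]
          _ = wMmat p n * -(mEMat p n * g) := by rw [hc]
          _ = -(wMmat p n * mEMat p n * g) := by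
                rw [Matrix.mul_neg, Matrix.mul_assoc]
          _ = -(-(mEMat p n * wMmat p n) * g) := by rw [wM_mE]
          _ = mEMat p n * (wMmat p n * g) := by
                rw [Matrix.neg_mul, neg_neg, Matrix.mul_assoc]
        · rw [← Matrix.mul_assoc, wM_mul_wM, Matrix.one_mul]
    · intro hmem
      rcases hmem with hH | ⟨h, hH, rfl⟩
      · obtain ⟨hsp, hcm⟩ := hH
        exact ⟨hsp, (key_norm p g hsp (Or.inl hcm)).1,
          (key_norm p g hsp (Or.inl hcm)).2⟩
      · obtain ⟨hsp, hcm⟩ := hH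
        have hsp2 : wMmat p n * h ∈ SpSet p n := sp_mul p (wM_Sp p) hsp
        have hcm2 : (wMmat p n * h) * mEMat p n
            = -(mEMat p n * (wMmat p n * h)) := by
          calc wMmat p n * h * mEMat p n
              = wMmat p n * (h * mEMat p n) := by rw [Matrix.mul_assoc]
          _ = wMmat p n * (mEMat p n * h) := by rw [hcm]
          _ = wMmat p n * mEMat p n * h := by rw [Matrix.mul_assoc]
          _ = -(mEMat p n * wMmat p n) * h := by rw [wM_mE]
          _ = -(mEMat p n * (wMmat p n * h)) := by
                rw [Matrix.neg_mul, Matrix.mul_assoc]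
        exact ⟨hsp2, (key_norm p _ hsp2 (Or.inr hcm2)).1,
          (key_norm p _ hsp2 (Or.inr hcm2)).2⟩
  · -- wDag normalizes H
    have hwd : wDag p n ∈ SpSet p n := wD_Sp p
    have hcc : wDag p n * mEMat p n = mEMat p n * wDag p n ∨
        wDag p n * mEMat p n = -(mEMat p n * wDag p n) := by
      rcases Nat.even_or_odd n with he | ho
      · exact Or.inl (wD_mE_even p (Nat.even_iff.mp he))
      · exact Or.inr (wD_mE_odd p (Nat.odd_iff.mp ho))
    exact ⟨hwd, (key_norm p _ hwd hcc).1, (key_norm p _ hwd hcc).2⟩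
  · -- wDag ∈ H ↔ Even n
    constructor
    · intro hmem
      rcases Nat.even_or_odd n with he | ho
      · exact he
      exfalso
      obtain ⟨_, hcm⟩ := hmem
      have h2 := wD_mE_odd p (Nat.odd_iff.mp ho)
      rw [hcm] at h2
      -- h2 : mE * wD = -(mE * wD)
      have h04 : (0 : ℕ) < 4*n := by omega
      have hn4 : n < 4*n := by omega
      set a0 : Fin (4*n) := ⟨0, h04⟩ with ha0
      set an : Fin (4*n) := ⟨n, hn4⟩ with han
      have e := congrFun (congrFun h2 a0) an
      rw [mE_diag, Matrix.diagonal_mul, Matrix.neg_apply, Matrix.diagonal_mul]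
        at e
      have hwdval : wDag p n a0 an = 1 := by
        unfold wDag
        rw [if_pos ⟨(show (a0:ℕ) < n from hn), (show (an:ℕ) = (a0:ℕ) + n
          from (Nat.zero_add n).symm)⟩]
      have hdval : dE p n ((a0 : Fin (4*n)) : ℕ) = 1 := by
        show dE p n 0 = 1
        unfold dE; rw [if_pos (by omega)]
      rw [hwdval, hdval, mul_one] at e
      have : (2 : ℚ_[p]) = 0 := by linear_combination e
      norm_num at this
    · intro hev
      exact ⟨wD_Sp p, wD_mE_even p (Nat.even_iff.mp hev)⟩
end

section
/- For the unipotent subgroups L^k (0 ≤ k ≤ 4n−1) of GL_{2n}(F) defined by L^k = {I + u : u_{i,j} = 0 unless i + j = k+1 and i < j}, L̄^k = w_{2n} L^k w_{2n}, and the groups L̂^k = ⟨L^0,…,L^{4n−k−1}, L̄^0,…,L̄^{k−1}⟩, Ľ^k = ⟨L^0,…,L^{4n−k−2}, L̄^0,…,L̄^{k−1}⟩, Ĺ^k = ⟨L^0,…,L^{4n−k−1}, L̄^0,…,L̄^{k}⟩: for 0 ≤ k ≤ 4n−2 one has L̂^k = L^{4n−k−1} ⋉ Ľ^k and L̂^{k+1}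 = L̄^k ⋉ Ľ^k, and Ĺ^k = L̄^k ⋉ L̂^k = L^{4n−k−1} ⋉ L̂^{k+1}. Moreover Ĺ^k = w_{2n} Ĺ^{4n−1−k} w_{2n}, and for k ≤ 2n the group Ĺ^k is conjugate to the full upper unitriangular group N of GL_{2n} by an explicit permutation matrix σ_k, i.e. Ĺ^k = σ_k^{-1} N σ_k. -/
open Matrix

variable (F : Type*) [Field F]

/-- The abelian "antidiagonal" root group
`L^k = {I + u : u_{i,j} = 0 unless i + j = k+1 and i < j}` (1-based indices),
as a subset of `GL_{2n}(F)`. -/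
def Lgen (n k : ℕ) : Set (GL (Fin (2*n)) F) :=
  {g | (∀ i : Fin (2*n), (g : Matrix (Fin (2*n)) (Fin (2*n)) F) i i = 1) ∧
    ∀ i j : Fin (2*n), i ≠ j →
      ¬((i : ℕ) < (j : ℕ) ∧ (i : ℕ) + (j : ℕ) + 2 = k + 1) →
      (g : Matrix (Fin (2*n)) (Fin (2*n)) F) i j = 0}

/-- `L̄^k = w_{2n} L^k w_{2n} = {I + u : u_{i,j} = 0 unless i + j = 4n+1−k and i > j}`
(1-based indices). -/
def Lbargen (n k : ℕ) : Set (GL (Fin (2*n)) F) :=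
  {g | (∀ i : Fin (2*n), (g : Matrix (Fin (2*n)) (Fin (2*n)) F) i i = 1) ∧
    ∀ i j : Fin (2*n), i ≠ j →
      ¬((j : ℕ) < (i : ℕ) ∧ (i : ℕ) + (j : ℕ) + 2 + k = 4*n + 1) →
      (g : Matrix (Fin (2*n)) (Fin (2*n)) F) i j = 0}

/-- `L̂^k = ⟨L^0,…,L^{4n−k−1}, L̄^0,…,L̄^{k−1}⟩`. -/
def Lhat (n k : ℕ) : Subgroup (GL (Fin (2*n)) F) :=
  Subgroup.closure
    ({g | ∃ l, l < 4*n - k ∧ g ∈ Lgen F n l} ∪ {g | ∃ l, l < k ∧ g ∈ Lbargen F n l})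

/-- `Ľ^k = ⟨L^0,…,L^{4n−k−2}, L̄^0,…,L̄^{k−1}⟩`. -/
def Lcheck (n k : ℕ) : Subgroup (GL (Fin (2*n)) F) :=
  Subgroup.closure
    ({g | ∃ l, l + 1 < 4*n - k ∧ g ∈ Lgen F n l} ∪ {g | ∃ l, l < k ∧ g ∈ Lbargen F n l})

/-- `Ĺ^k = ⟨L^0,…,L^{4n−k−1}, L̄^0,…,L̄^{k}⟩`. -/
def Lacute (n k : ℕ) : Subgroup (GL (Fin (2*n)) F) :=
  Subgroup.closure
    ({g | ∃ l, l < 4*n - k ∧ g ∈ Lgen F n l} ∪ {g | ∃ l, l < k + 1 ∧ g ∈ Lbargen F n l})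

/-- `Whole = Top ⋉ Nrm`: `Nrm` is normal in `Whole`, `Whole = Top · Nrm`, and
`Top ∩ Nrm = 1`. -/
def IsSemidirectProd {G : Type*} [Group G] (Top : Set G) (Nrm Whole : Subgroup G) : Prop :=
  Top ⊆ (Whole : Set G) ∧ Nrm ≤ Whole ∧
  (∀ x ∈ Whole, ∀ y ∈ Nrm, x * y * x⁻¹ ∈ Nrm) ∧
  (∀ g ∈ Whole, ∃ a ∈ Top, ∃ b ∈ Nrm, g = a * b) ∧
  (∀ a ∈ Top, a ∈ Nrm → a = 1)

/-- The antidiagonal permutation matrix `w_{2n}`. -/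
def wPerm (n : ℕ) : Matrix (Fin (2*n)) (Fin (2*n)) F :=
  fun i j => if (i : ℕ) + (j : ℕ) = 2*n - 1 then 1 else 0

/-- The permutation matrix `σ_k` with `σ_k e_i = e_{f_k(i)}`, where (0-based)
`f_k(i) = i` for `i < 2n−k`, `f_k(i) = 2i+k+1−2n` for `2n−k ≤ i < 2n−⌊(k+1)/2⌋`,
and `f_k(i) = 6n−k−2i−2` otherwise. -/
def sigmaPerm (n k : ℕ) : Matrix (Fin (2*n)) (Fin (2*n)) F :=
  fun i j => if (i : ℕ) =
      (if (j : ℕ) < 2*n - k then (j : ℕ)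
       else if (j : ℕ) < 2*n - (k+1)/2 then 2*(j : ℕ) + k + 1 - 2*n
       else 6*n - k - 2*(j : ℕ) - 2) then 1 else 0

namespace S18

/-- The positions allowed: upper part up to antidiagonal `a`, lower part from `b` on. -/
def MyRel (a b i j : ℕ) : Prop := (i < j ∧ i + j ≤ a) ∨ (j < i ∧ b ≤ i + j)

/-- Rank function: position of `i` in the total order associated to `MyRel a (a+1)`. -/
def rnk (n a i : ℕ) : ℕ :=
  if 2*i ≤ a then (if i + 2*n ≤ a + 1 then i else 2*i + 2*n - 1 - a)
  else (if i ≤ a then a + 2*n - 2*i else 2*n - 1 - i)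

lemma rnk_lt {n a i : ℕ} (h : i < 2*n) : rnk n a i < 2*n := by
  unfold rnk; split_ifs <;> omega

lemma rel_rnk {n a b i j : ℕ} (hab : a < b ∨ a = 0) (hi : i < 2*n) (hj : j < 2*n)
    (h : MyRel a b i j) : rnk n a i < rnk n a j := by
  unfold MyRel at h; unfold rnk; split_ifs <;> omega

end S18

/-- Unipotent with support in `MyRel a b`. -/
def Ucond (n a b : ℕ) (m : Matrix (Fin (2*n)) (Fin (2*n)) F) : Prop :=
  (∀ i, m i i = 1) ∧
    ∀ i j : Fin (2*n), i ≠ j → ¬ S18.MyRel a b (i : ℕ) (j : ℕ) → m i j = 0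

namespace S18

lemma pow_supp {n a b : ℕ} (hab : a < b ∨ a = 0)
    (u : Matrix (Fin (2*n)) (Fin (2*n)) F)
    (hu : ∀ i j : Fin (2*n), ¬ MyRel a b (i : ℕ) (j : ℕ) → u i j = 0) :
    ∀ (t : ℕ) (i j : Fin (2*n)), (u ^ t) i j ≠ 0 →
      (t = 0 ∧ i = j) ∨ (MyRel a b (i:ℕ) (j:ℕ) ∧ rnk n a i + t ≤ rnk n a j) := by
  intro t
  induction t with
  | zero =>
    intro i j h
    left
    refine ⟨rfl, ?_⟩
    by_contra hne
    rw [pow_zero] at h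
    exact h (Matrix.one_apply_ne hne)
  | succ t ih =>
    intro i j h
    rw [pow_succ', Matrix.mul_apply] at h
    obtain ⟨m, -, hm⟩ := Finset.exists_ne_zero_of_sum_ne_zero h
    have h1 : u i m ≠ 0 := left_ne_zero_of_mul hm
    have h2 : (u ^ t) m j ≠ 0 := right_ne_zero_of_mul hm
    have hrim : MyRel a b (i:ℕ) (m:ℕ) := by
      by_contra hr; exact h1 (hu i m hr)
    have hram := rel_rnk (n := n) hab i.2 m.2 hrim
    rcases ih m j h2 with ⟨ht, rfl⟩ | ⟨hrmj, hle⟩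
    · exact Or.inr ⟨hrim, by omega⟩
    · refine Or.inr ⟨?_, by omega⟩
      unfold MyRel at hrim hrmj ⊢; omega

lemma pow_eq_zero {n a b : ℕ} (hn : 1 ≤ n) (hab : a < b ∨ a = 0)
    (u : Matrix (Fin (2*n)) (Fin (2*n)) F)
    (hu : ∀ i j : Fin (2*n), ¬ MyRel a b (i : ℕ) (j : ℕ) → u i j = 0) :
    u ^ (2*n) = 0 := by
  ext i j
  by_contra h
  rcases pow_supp F hab u hu (2*n) i j h with ⟨h0, -⟩ | ⟨-, hle⟩
  · omega
  · have h1 := rnk_lt (n := n) (a := a) i.2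
    have h2 := rnk_lt (n := n) (a := a) j.2
    omega

lemma Ucond_one {n a b : ℕ} : Ucond F n a b 1 :=
  ⟨fun i => Matrix.one_apply_eq i, fun _ _ hij _ => Matrix.one_apply_ne hij⟩

lemma Ucond_mul {n a b : ℕ} (hab : a < b ∨ a = 0)
    {x y : Matrix (Fin (2*n)) (Fin (2*n)) F}
    (hx : Ucond F n a b x) (hy : Ucond F n a b y) : Ucond F n a b (x * y) := by
  constructor
  · intro i
    rw [Matrix.mul_apply, Finset.sum_eq_single i]
    · rw [hx.1, hy.1, one_mul]
    · intro m _ hmi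
      by_cases h1 : x i m = 0
      · rw [h1, zero_mul]
      by_cases h2 : y m i = 0
      · rw [h2, mul_zero]
      exfalso
      have r1 : MyRel a b (i:ℕ) (m:ℕ) := by
        by_contra hr; exact h1 (hx.2 i m (Ne.symm hmi) hr)
      have r2 : MyRel a b (m:ℕ) (i:ℕ) := by
        by_contra hr; exact h2 (hy.2 m i hmi hr)
      unfold MyRel at r1 r2; omega
    · intro h; exact absurd (Finset.mem_univ i) h
  · intro i j hij hr
    rw [Matrix.mul_apply]
    apply Finset.sum_eq_zero
    intro m _
    by_cases h1 : x i m = 0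
    · rw [h1, zero_mul]
    by_cases h2 : y m j = 0
    · rw [h2, mul_zero]
    exfalso
    have hijn : (i:ℕ) ≠ (j:ℕ) := Fin.val_ne_of_ne hij
    have r1 : (i:ℕ) = (m:ℕ) ∨ MyRel a b (i:ℕ) (m:ℕ) := by
      by_cases h : i = m
      · exact Or.inl (congrArg Fin.val h)
      · exact Or.inr (by by_contra hr'; exact h1 (hx.2 i m h hr'))
    have r2 : (m:ℕ) = (j:ℕ) ∨ MyRel a b (m:ℕ) (j:ℕ) := by
      by_cases h : m = j
      · exact Or.inl (congrArg Fin.val h)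
      · exact Or.inr (by by_contra hr'; exact h2 (hy.2 m j h hr'))
    unfold MyRel at r1 r2 hr; omega

lemma Ucond_inv {n a b : ℕ} (hn : 1 ≤ n) (hab : a < b ∨ a = 0)
    (g : GL (Fin (2*n)) F) (hg : Ucond F n a b (↑g : Matrix (Fin (2*n)) (Fin (2*n)) F)) :
    Ucond F n a b (↑(g⁻¹) : Matrix (Fin (2*n)) (Fin (2*n)) F) := by
  set w : Matrix (Fin (2*n)) (Fin (2*n)) F := -((↑g : Matrix (Fin (2*n)) (Fin (2*n)) F) - 1)
    with hw
  have hsupp : ∀ i j : Fin (2*n), ¬ MyRel a b (i:ℕ) (j:ℕ) → w i j = 0 := by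
    intro i j hr
    by_cases h : i = j
    · subst h
      simp [hw, hg.1 i]
    · simp [hw, Matrix.one_apply_ne h, hg.2 i j h hr]
  have hpow := pow_supp F hab w hsupp
  have hz : w ^ (2*n) = 0 := pow_eq_zero F hn hab w hsupp
  set v : Matrix (Fin (2*n)) (Fin (2*n)) F := ∑ t ∈ Finset.range (2*n), w ^ t with hv
  have h2 : w - 1 = -(↑g : Matrix (Fin (2*n)) (Fin (2*n)) F) := by
    rw [hw]; abel
  have hgv : (↑g : Matrix (Fin (2*n)) (Fin (2*n)) F) * v = 1 := by
    have h1 : ((w - 1) * v) = w ^ (2*n) - 1 := mul_geom_sum w (2*n)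
    rw [h2, hz, neg_mul, zero_sub] at h1
    exact neg_injective h1
  have hval : (↑(g⁻¹) : Matrix (Fin (2*n)) (Fin (2*n)) F) = v := by
    calc (↑(g⁻¹) : Matrix (Fin (2*n)) (Fin (2*n)) F)
        = ↑(g⁻¹) * ((↑g : Matrix (Fin (2*n)) (Fin (2*n)) F) * v) := by rw [hgv, mul_one]
      _ = (↑(g⁻¹) * (↑g : Matrix (Fin (2*n)) (Fin (2*n)) F)) * v := by rw [mul_assoc]
      _ = v := by rw [← Units.val_mul, inv_mul_cancel, Units.val_one, one_mul]
  rw [hval]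
  constructor
  · intro i
    rw [hv, Matrix.sum_apply, Finset.sum_eq_single 0]
    · rw [pow_zero, Matrix.one_apply_eq]
    · intro t _ ht
      by_contra hne
      rcases hpow t i i hne with ⟨h0, -⟩ | ⟨hr, -⟩
      · exact ht h0
      · unfold MyRel at hr; omega
    · intro h; exact absurd (Finset.mem_range.mpr (by omega)) h
  · intro i j hij hr
    rw [hv, Matrix.sum_apply]
    apply Finset.sum_eq_zero
    intro t _
    by_contra hne
    rcases hpow t i j hne with ⟨-, h0⟩ | ⟨hr', -⟩
    · exact hij h0
    · exact hr hr'

end S18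

namespace S18

lemma peel_upper {n a b : ℕ} (hab : a < b ∨ a = 0) (g : GL (Fin (2*n)) F)
    (hg : Ucond F n a b (↑g : Matrix (Fin (2*n)) (Fin (2*n)) F)) :
    ∃ x h : GL (Fin (2*n)) F, x ∈ Lgen F n (a+1) ∧
      Ucond F n (a-1) b (↑h : Matrix (Fin (2*n)) (Fin (2*n)) F) ∧ g = x * h := by
  set G : Matrix (Fin (2*n)) (Fin (2*n)) F := ↑g with hG
  set u : Matrix (Fin (2*n)) (Fin (2*n)) F :=
    fun i j => if (i:ℕ) < (j:ℕ) ∧ (i:ℕ) + (j:ℕ) = a then G i j else 0 with hu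
  have huu : u * u = 0 := by
    ext i j
    simp only [Matrix.mul_apply, Matrix.zero_apply]
    apply Finset.sum_eq_zero
    intro m _
    by_cases h1 : (i:ℕ) < (m:ℕ) ∧ (i:ℕ) + (m:ℕ) = a
    · by_cases h2 : (m:ℕ) < (j:ℕ) ∧ (m:ℕ) + (j:ℕ) = a
      · exfalso; omega
      · simp only [hu]; rw [if_neg h2, mul_zero]
    · simp only [hu]; rw [if_neg h1, zero_mul]
  have hx1 : (1 + u) * (1 - u) = 1 := by
    have e : (1 + u) * (1 - u) = 1 - u * u := by noncomm_ring
    rw [e, huu, sub_zero]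
  have hx2 : (1 - u) * (1 + u) = 1 := by
    have e : (1 - u) * (1 + u) = 1 - u * u := by noncomm_ring
    rw [e, huu, sub_zero]
  refine ⟨⟨1 + u, 1 - u, hx1, hx2⟩, ⟨1 + u, 1 - u, hx1, hx2⟩⁻¹ * g, ?_, ?_, ?_⟩
  · constructor
    · intro i
      have h0 : ¬((i:ℕ) < (i:ℕ) ∧ (i:ℕ) + (i:ℕ) = a) := by omega
      show (1 + u) i i = 1
      rw [Matrix.add_apply, Matrix.one_apply_eq]
      simp only [hu]; rw [if_neg h0, add_zero]
    · intro i j hij hcond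
      have h1 : ¬((i:ℕ) < (j:ℕ) ∧ (i:ℕ) + (j:ℕ) = a) := by
        intro hc; exact hcond ⟨hc.1, by omega⟩
      show (1 + u) i j = 0
      rw [Matrix.add_apply, Matrix.one_apply_ne hij]
      simp only [hu]
      rw [if_neg h1, zero_add]
  · have hval : (↑((⟨1 + u, 1 - u, hx1, hx2⟩ : GL (Fin (2*n)) F)⁻¹ * g) :
        Matrix (Fin (2*n)) (Fin (2*n)) F) = G - u * G := by
      rw [Units.val_mul, Units.inv_mk]
      show (1 - u) * G = G - u * G
      rw [sub_mul, one_mul]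
    rw [hval]
    constructor
    · intro i
      rw [Matrix.sub_apply]
      have hz : (u * G) i i = 0 := by
        rw [Matrix.mul_apply]
        apply Finset.sum_eq_zero
        intro m _
        by_cases h1 : (i:ℕ) < (m:ℕ) ∧ (i:ℕ) + (m:ℕ) = a
        · have hmi : m ≠ i := Fin.ne_of_val_ne (by omega)
          have hGmi : G m i = 0 := hg.2 m i hmi (by unfold MyRel; omega)
          simp only [hu]; rw [if_pos h1, hGmi, mul_zero]
        · simp only [hu]; rw [if_neg h1, zero_mul]
      rw [hz, hg.1 i, sub_zero]
    · intro i j hij hcond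
      have hijn : (i:ℕ) ≠ (j:ℕ) := Fin.val_ne_of_ne hij
      rw [Matrix.sub_apply]
      have hsum : (u * G) i j = u i j * G j j := by
        rw [Matrix.mul_apply]
        apply Finset.sum_eq_single j
        · intro m _ hmj
          by_cases h1 : (i:ℕ) < (m:ℕ) ∧ (i:ℕ) + (m:ℕ) = a
          · have hGmj : G m j = 0 := by
              apply hg.2 m j hmj
              unfold MyRel at hcond ⊢
              omega
            rw [hGmj, mul_zero]
          · simp only [hu]; rw [if_neg h1, zero_mul]
        · intro h; exact absurd (Finset.mem_univ j) h
      rw [hsum, hg.1 j, mul_one]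
      by_cases hline : (i:ℕ) < (j:ℕ) ∧ (i:ℕ) + (j:ℕ) = a
      · simp only [hu]; rw [if_pos hline, sub_self]
      · have hGij : G i j = 0 := hg.2 i j hij (by unfold MyRel at hcond ⊢; omega)
        simp only [hu]; rw [if_neg hline, hGij, sub_zero]
  · exact (mul_inv_cancel_left _ g).symm

lemma peel_lower {n a b : ℕ} (hab : a < b ∨ a = 0) (hb : b + 1 ≤ 4*n) (g : GL (Fin (2*n)) F)
    (hg : Ucond F n a b (↑g : Matrix (Fin (2*n)) (Fin (2*n)) F)) :
    ∃ x h : GL (Fin (2*n)) F, x ∈ Lbargen F n (4*n-1-b) ∧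
      Ucond F n a (b+1) (↑h : Matrix (Fin (2*n)) (Fin (2*n)) F) ∧ g = x * h := by
  set G : Matrix (Fin (2*n)) (Fin (2*n)) F := ↑g with hG
  set u : Matrix (Fin (2*n)) (Fin (2*n)) F :=
    fun i j => if (j:ℕ) < (i:ℕ) ∧ (i:ℕ) + (j:ℕ) = b then G i j else 0 with hu
  have huu : u * u = 0 := by
    ext i j
    simp only [Matrix.mul_apply, Matrix.zero_apply]
    apply Finset.sum_eq_zero
    intro m _
    by_cases h1 : (m:ℕ) < (i:ℕ) ∧ (i:ℕ) + (m:ℕ) = b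
    · by_cases h2 : (j:ℕ) < (m:ℕ) ∧ (m:ℕ) + (j:ℕ) = b
      · exfalso; omega
      · simp only [hu]; rw [if_neg h2, mul_zero]
    · simp only [hu]; rw [if_neg h1, zero_mul]
  have hx1 : (1 + u) * (1 - u) = 1 := by
    have e : (1 + u) * (1 - u) = 1 - u * u := by noncomm_ring
    rw [e, huu, sub_zero]
  have hx2 : (1 - u) * (1 + u) = 1 := by
    have e : (1 - u) * (1 + u) = 1 - u * u := by noncomm_ring
    rw [e, huu, sub_zero]
  refine ⟨⟨1 + u, 1 - u, hx1, hx2⟩, ⟨1 + u, 1 - u, hx1, hx2⟩⁻¹ * g, ?_, ?_, ?_⟩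
  · constructor
    · intro i
      have h0 : ¬((i:ℕ) < (i:ℕ) ∧ (i:ℕ) + (i:ℕ) = b) := by omega
      show (1 + u) i i = 1
      rw [Matrix.add_apply, Matrix.one_apply_eq]
      simp only [hu]; rw [if_neg h0, add_zero]
    · intro i j hij hcond
      have h1 : ¬((j:ℕ) < (i:ℕ) ∧ (i:ℕ) + (j:ℕ) = b) := by
        intro hc; exact hcond ⟨hc.1, by omega⟩
      show (1 + u) i j = 0
      rw [Matrix.add_apply, Matrix.one_apply_ne hij]
      simp only [hu]
      rw [if_neg h1, zero_add]
  · have hval : (↑((⟨1 + u, 1 - u, hx1, hx2⟩ : GL (Fin (2*n)) F)⁻¹ * g) :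
        Matrix (Fin (2*n)) (Fin (2*n)) F) = G - u * G := by
      rw [Units.val_mul, Units.inv_mk]
      show (1 - u) * G = G - u * G
      rw [sub_mul, one_mul]
    rw [hval]
    constructor
    · intro i
      rw [Matrix.sub_apply]
      have hz : (u * G) i i = 0 := by
        rw [Matrix.mul_apply]
        apply Finset.sum_eq_zero
        intro m _
        by_cases h1 : (m:ℕ) < (i:ℕ) ∧ (i:ℕ) + (m:ℕ) = b
        · have hmi : m ≠ i := Fin.ne_of_val_ne (by omega)
          have hGmi : G m i = 0 := hg.2 m i hmi (by unfold MyRel; omega)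
          simp only [hu]; rw [if_pos h1, hGmi, mul_zero]
        · simp only [hu]; rw [if_neg h1, zero_mul]
      rw [hz, hg.1 i, sub_zero]
    · intro i j hij hcond
      have hijn : (i:ℕ) ≠ (j:ℕ) := Fin.val_ne_of_ne hij
      rw [Matrix.sub_apply]
      have hsum : (u * G) i j = u i j * G j j := by
        rw [Matrix.mul_apply]
        apply Finset.sum_eq_single j
        · intro m _ hmj
          by_cases h1 : (m:ℕ) < (i:ℕ) ∧ (i:ℕ) + (m:ℕ) = b
          · have hGmj : G m j = 0 := by
              apply hg.2 m j hmj
              unfold MyRel at hcond ⊢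
              omega
            rw [hGmj, mul_zero]
          · simp only [hu]; rw [if_neg h1, zero_mul]
        · intro h; exact absurd (Finset.mem_univ j) h
      rw [hsum, hg.1 j, mul_one]
      by_cases hline : (j:ℕ) < (i:ℕ) ∧ (i:ℕ) + (j:ℕ) = b
      · simp only [hu]; rw [if_pos hline, sub_self]
      · have hGij : G i j = 0 := hg.2 i j hij (by unfold MyRel at hcond ⊢; omega)
        simp only [hu]; rw [if_neg hline, hGij, sub_zero]
  · exact (mul_inv_cancel_left _ g).symm

lemma Ucond_eq_one {n a b : ℕ} (ha : a = 0) (hb : 4*n ≤ b) (g : GL (Fin (2*n)) F)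
    (hg : Ucond F n a b (↑g : Matrix (Fin (2*n)) (Fin (2*n)) F)) : g = 1 := by
  apply Units.ext
  rw [Units.val_one]
  ext i j
  by_cases h : i = j
  · subst h; rw [hg.1, Matrix.one_apply_eq]
  · rw [Matrix.one_apply_ne h]
    apply hg.2 i j h
    have hi := i.2
    have hj := j.2
    unfold MyRel
    omega

lemma Lgen_triv {n l : ℕ} (hl : l ≤ 1) {g : GL (Fin (2*n)) F}
    (hg : g ∈ Lgen F n l) : g = 1 := by
  apply Units.ext
  rw [Units.val_one]
  ext i j
  by_cases h : i = j
  · subst h; rw [hg.1, Matrix.one_apply_eq]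
  · rw [Matrix.one_apply_ne h]
    exact hg.2 i j h (by omega)

lemma U_le {n : ℕ} (hn : 1 ≤ n) (H : Subgroup (GL (Fin (2*n)) F)) :
    ∀ (M a b : ℕ), a + (4*n - b) ≤ M → (a < b ∨ a = 0) →
    (∀ l, l ≤ a → ∀ g ∈ Lgen F n (l+1), g ∈ H) →
    (∀ l, b ≤ l → l + 1 ≤ 4*n → ∀ g ∈ Lbargen F n (4*n-1-l), g ∈ H) →
    ∀ g : GL (Fin (2*n)) F, Ucond F n a b ↑g → g ∈ H := by
  intro M
  induction M with
  | zero =>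
    intro a b hM hab hup hlow g hg
    rw [Ucond_eq_one F (by omega) (by omega) g hg]
    exact one_mem H
  | succ M ih =>
    intro a b hM hab hup hlow g hg
    rcases Nat.eq_zero_or_pos a with ha | ha
    · rcases Nat.lt_or_ge b (4*n) with hb | hb
      · obtain ⟨x, h, hx, hh, rfl⟩ := peel_lower F (Or.inr ha) (by omega) g hg
        exact mul_mem (hlow b le_rfl (by omega) x hx)
          (ih a (b+1) (by omega) (Or.inr ha) hup
            (fun l h1 h2 => hlow l (by omega) h2) h hh)
      · rw [Ucond_eq_one F ha hb g hg]; exact one_mem H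
    · obtain ⟨x, h, hx, hh, rfl⟩ := peel_upper F hab g hg
      exact mul_mem (hup a le_rfl x hx)
        (ih (a-1) b (by omega) (by omega)
          (fun l hl => hup l (by omega)) hlow h hh)

lemma Lgen_Ucond {n a b l : ℕ} (hl : l ≤ a + 1) {g : GL (Fin (2*n)) F}
    (hg : g ∈ Lgen F n l) : Ucond F n a b ↑g := by
  refine ⟨hg.1, fun i j hij hr => hg.2 i j hij ?_⟩
  unfold MyRel at hr; omega

lemma Lbargen_Ucond {n a b l : ℕ} (hl : b + l + 1 ≤ 4*n) {g : GL (Fin (2*n)) F}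
    (hg : g ∈ Lbargen F n l) : Ucond F n a b ↑g := by
  refine ⟨hg.1, fun i j hij hr => hg.2 i j hij ?_⟩
  unfold MyRel at hr; omega

lemma closure_Ucond {n a b : ℕ} (hn : 1 ≤ n) (hab : a < b ∨ a = 0)
    {S : Set (GL (Fin (2*n)) F)} (hS : ∀ g ∈ S, Ucond F n a b ↑g) :
    ∀ g ∈ Subgroup.closure S, Ucond F n a b ↑g := by
  intro g hg
  induction hg using Subgroup.closure_induction with
  | mem x hx => exact hS x hx
  | one => rw [Units.val_one]; exact Ucond_one F
  | mul x y hx hy ihx ihy => rw [Units.val_mul]; exact Ucond_mul F hab ihx ihy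
  | inv x hx ihx => exact Ucond_inv F hn hab x ihx

lemma char_Lhat {n : ℕ} (hn : 1 ≤ n) {k : ℕ} (hk : k ≤ 4*n-1) (g : GL (Fin (2*n)) F) :
    g ∈ Lhat F n k ↔ Ucond F n (4*n-k-2) (4*n-k) ↑g := by
  constructor
  · intro hg
    refine closure_Ucond F hn (by omega) ?_ g hg
    rintro x (⟨l, hl, hx⟩ | ⟨l, hl, hx⟩)
    · exact Lgen_Ucond F (by omega) hx
    · exact Lbargen_Ucond F (by omega) hx
  · intro hg
    refine U_le F hn _ (4*n) (4*n-k-2) (4*n-k) (by omega) (by omega) ?_ ?_ g hg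
    · intro l hl x hx
      by_cases h : l + 1 < 4*n - k
      · exact Subgroup.subset_closure (Set.mem_union_left _ ⟨l+1, h, hx⟩)
      · rw [Lgen_triv F (by omega) hx]; exact one_mem _
    · intro l h1 h2 x hx
      exact Subgroup.subset_closure (Set.mem_union_right _ ⟨4*n-1-l, by omega, hx⟩)

lemma char_Lcheck {n : ℕ} (hn : 1 ≤ n) {k : ℕ} (hk : k ≤ 4*n-2) (g : GL (Fin (2*n)) F) :
    g ∈ Lcheck F n k ↔ Ucond F n (4*n-k-3) (4*n-k) ↑g := by
  constructor
  · intro hg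
    refine closure_Ucond F hn (by omega) ?_ g hg
    rintro x (⟨l, hl, hx⟩ | ⟨l, hl, hx⟩)
    · exact Lgen_Ucond F (by omega) hx
    · exact Lbargen_Ucond F (by omega) hx
  · intro hg
    refine U_le F hn _ (4*n) (4*n-k-3) (4*n-k) (by omega) (by omega) ?_ ?_ g hg
    · intro l hl x hx
      by_cases h : l + 1 + 1 < 4*n - k
      · exact Subgroup.subset_closure (Set.mem_union_left _ ⟨l+1, h, hx⟩)
      · rw [Lgen_triv F (by omega) hx]; exact one_mem _
    · intro l h1 h2 x hx
      exact Subgroup.subset_closure (Set.mem_union_right _ ⟨4*n-1-l, by omega, hx⟩)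

lemma char_Lacute {n : ℕ} (hn : 1 ≤ n) {k : ℕ} (hk : k ≤ 4*n-1) (g : GL (Fin (2*n)) F) :
    g ∈ Lacute F n k ↔ Ucond F n (4*n-k-2) (4*n-k-1) ↑g := by
  constructor
  · intro hg
    refine closure_Ucond F hn (by omega) ?_ g hg
    rintro x (⟨l, hl, hx⟩ | ⟨l, hl, hx⟩)
    · exact Lgen_Ucond F (by omega) hx
    · exact Lbargen_Ucond F (by omega) hx
  · intro hg
    refine U_le F hn _ (4*n) (4*n-k-2) (4*n-k-1) (by omega) (by omega) ?_ ?_ g hg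
    · intro l hl x hx
      by_cases h : l + 1 < 4*n - k
      · exact Subgroup.subset_closure (Set.mem_union_left _ ⟨l+1, h, hx⟩)
      · rw [Lgen_triv F (by omega) hx]; exact one_mem _
    · intro l h1 h2 x hx
      exact Subgroup.subset_closure (Set.mem_union_right _ ⟨4*n-1-l, by omega, hx⟩)

end S18

namespace S18

lemma conj_mem {n a b a' b' : ℕ}
    (hIdeal : ∀ i m p j : ℕ, i < 2*n → m < 2*n → p < 2*n → j < 2*n →
      (MyRel a b i m ∨ i = m) → MyRel a' b' m p → (MyRel a b p j ∨ p = j) →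
      (i ≠ j ∧ MyRel a' b' i j))
    (x y : GL (Fin (2*n)) F)
    (hx : Ucond F n a b (↑x : Matrix (Fin (2*n)) (Fin (2*n)) F))
    (hx' : Ucond F n a b (↑(x⁻¹) : Matrix (Fin (2*n)) (Fin (2*n)) F))
    (hy : Ucond F n a' b' (↑y : Matrix (Fin (2*n)) (Fin (2*n)) F)) :
    Ucond F n a' b' (↑(x * y * x⁻¹) : Matrix (Fin (2*n)) (Fin (2*n)) F) := by
  set X : Matrix (Fin (2*n)) (Fin (2*n)) F := ↑x with hX
  set X' : Matrix (Fin (2*n)) (Fin (2*n)) F := ↑(x⁻¹) with hX'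
  set v : Matrix (Fin (2*n)) (Fin (2*n)) F := (↑y : Matrix (Fin (2*n)) (Fin (2*n)) F) - 1
    with hv
  have hvsupp : ∀ m p : Fin (2*n), ¬ MyRel a' b' (m:ℕ) (p:ℕ) → v m p = 0 := by
    intro m p hr
    by_cases h : m = p
    · subst h; simp [hv, hy.1 m]
    · simp [hv, Matrix.one_apply_ne h, hy.2 m p h hr]
  have hXX : X * X' = 1 := by
    rw [hX, hX', ← Units.val_mul, mul_inv_cancel, Units.val_one]
  have hval : (↑(x * y * x⁻¹) : Matrix (Fin (2*n)) (Fin (2*n)) F) = 1 + X * v * X' := by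
    rw [Units.val_mul, Units.val_mul, ← hX, ← hX']
    have hy1 : (↑y : Matrix (Fin (2*n)) (Fin (2*n)) F) = 1 + v := by rw [hv]; abel
    rw [hy1, mul_add, mul_one, add_mul, hXX, mul_assoc]
  have hkey : ∀ i j : Fin (2*n), (i = j ∨ ¬ MyRel a' b' (i:ℕ) (j:ℕ)) →
      (X * v * X') i j = 0 := by
    intro i j hdisj
    rw [Matrix.mul_apply]
    apply Finset.sum_eq_zero
    intro p _
    by_cases hp : X' p j = 0
    · rw [hp, mul_zero]
    rw [Matrix.mul_apply, Finset.sum_mul]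
    apply Finset.sum_eq_zero
    intro m _
    by_cases hm : X i m = 0
    · rw [hm, zero_mul, zero_mul]
    by_cases hv0 : v m p = 0
    · rw [hv0, mul_zero, zero_mul]
    exfalso
    have r1 : MyRel a b (i:ℕ) (m:ℕ) ∨ (i:ℕ) = (m:ℕ) := by
      by_cases h : i = m
      · exact Or.inr (congrArg Fin.val h)
      · exact Or.inl (by by_contra hr; exact hm (hx.2 i m h hr))
    have r2 : MyRel a' b' (m:ℕ) (p:ℕ) := by
      by_contra hr; exact hv0 (hvsupp m p hr)
    have r3 : MyRel a b (p:ℕ) (j:ℕ) ∨ (p:ℕ) = (j:ℕ) := by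
      by_cases h : p = j
      · exact Or.inr (congrArg Fin.val h)
      · exact Or.inl (by by_contra hr; exact hp (hx'.2 p j h hr))
    obtain ⟨hne, hrel⟩ := hIdeal i m p j i.2 m.2 p.2 j.2 r1 r2 r3
    rcases hdisj with h | h
    · exact hne (congrArg Fin.val h)
    · exact h hrel
  rw [hval]
  constructor
  · intro i
    rw [Matrix.add_apply, hkey i i (Or.inl rfl), Matrix.one_apply_eq, add_zero]
  · intro i j hij hr
    rw [Matrix.add_apply, hkey i j (Or.inr hr), Matrix.one_apply_ne hij, add_zero]

lemma sd_upper {n a b : ℕ} (hab : a < b)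
    (Nrm Whole : Subgroup (GL (Fin (2*n)) F))
    (hN : ∀ g, g ∈ Nrm ↔ Ucond F n (a-1) b ↑g)
    (hW : ∀ g, g ∈ Whole ↔ Ucond F n a b ↑g) :
    IsSemidirectProd (Lgen F n (a+1)) Nrm Whole := by
  refine ⟨?_, ?_, ?_, ?_, ?_⟩
  · intro g hg
    exact (hW g).2 (Lgen_Ucond F le_rfl hg)
  · intro g hg
    refine (hW g).2 ?_
    obtain ⟨h1, h2⟩ := (hN g).1 hg
    refine ⟨h1, fun i j hij hr => h2 i j hij ?_⟩
    unfold MyRel at hr ⊢; omega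
  · intro x hx y hy
    refine (hN _).2 ?_
    refine conj_mem F ?_ x y ((hW x).1 hx) ((hW _).1 (inv_mem hx)) ((hN y).1 hy)
    intro i m p j hi hm hp hj r1 r2 r3
    unfold MyRel at r1 r2 r3 ⊢
    omega
  · intro g hg
    obtain ⟨x, h, hx, hh, rfl⟩ := peel_upper F (Or.inl hab) g ((hW g).1 hg)
    exact ⟨x, hx, h, (hN h).2 hh, rfl⟩
  · intro t ht htN
    apply Units.ext
    rw [Units.val_one]
    ext i j
    by_cases h : i = j
    · subst h; rw [ht.1, Matrix.one_apply_eq]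
    · rw [Matrix.one_apply_ne h]
      by_cases hline : (i:ℕ) < (j:ℕ) ∧ (i:ℕ) + (j:ℕ) + 2 = (a+1) + 1
      · exact ((hN t).1 htN).2 i j h (by unfold MyRel; omega)
      · exact ht.2 i j h hline

lemma sd_lower {n a b : ℕ} (hab : a < b) (hb : b + 1 ≤ 4*n)
    (Nrm Whole : Subgroup (GL (Fin (2*n)) F))
    (hN : ∀ g, g ∈ Nrm ↔ Ucond F n a (b+1) ↑g)
    (hW : ∀ g, g ∈ Whole ↔ Ucond F n a b ↑g) :
    IsSemidirectProd (Lbargen F n (4*n-1-b)) Nrm Whole := by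
  refine ⟨?_, ?_, ?_, ?_, ?_⟩
  · intro g hg
    exact (hW g).2 (Lbargen_Ucond F (by omega) hg)
  · intro g hg
    refine (hW g).2 ?_
    obtain ⟨h1, h2⟩ := (hN g).1 hg
    refine ⟨h1, fun i j hij hr => h2 i j hij ?_⟩
    unfold MyRel at hr ⊢; omega
  · intro x hx y hy
    refine (hN _).2 ?_
    refine conj_mem F ?_ x y ((hW x).1 hx) ((hW _).1 (inv_mem hx)) ((hN y).1 hy)
    intro i m p j hi hm hp hj r1 r2 r3
    unfold MyRel at r1 r2 r3 ⊢
    omega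
  · intro g hg
    obtain ⟨x, h, hx, hh, rfl⟩ := peel_lower F (Or.inl hab) hb g ((hW g).1 hg)
    exact ⟨x, hx, h, (hN h).2 hh, rfl⟩
  · intro t ht htN
    apply Units.ext
    rw [Units.val_one]
    ext i j
    by_cases h : i = j
    · subst h; rw [ht.1, Matrix.one_apply_eq]
    · rw [Matrix.one_apply_ne h]
      by_cases hline : (j:ℕ) < (i:ℕ) ∧ (i:ℕ) + (j:ℕ) + 2 + (4*n-1-b) = 4*n + 1
      · exact ((hN t).1 htN).2 i j h (by unfold MyRel; omega)
      · exact ht.2 i j h hline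

end S18

namespace S18

def revF (n : ℕ) (i : Fin (2*n)) : Fin (2*n) :=
  ⟨2*n-1-(i:ℕ), by have := i.2; omega⟩

lemma revF_val {n : ℕ} (i : Fin (2*n)) : ((revF n i):ℕ) = 2*n-1-(i:ℕ) := rfl

lemma wPerm_apply {n : ℕ} (i j : Fin (2*n)) :
    wPerm F n i j = if (i:ℕ) + (j:ℕ) = 2*n-1 then 1 else 0 := rfl

lemma wmul {n : ℕ} (m : Matrix (Fin (2*n)) (Fin (2*n)) F) (i j : Fin (2*n)) :
    (wPerm F n * m) i j = m (revF n i) j := by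
  rw [Matrix.mul_apply, Finset.sum_eq_single (revF n i)]
  · rw [wPerm_apply, if_pos (by rw [revF_val]; have := i.2; omega), one_mul]
  · intro p _ hp
    rw [wPerm_apply, if_neg, zero_mul]
    intro hc
    apply hp
    apply Fin.ext
    rw [revF_val]
    have := i.2; have := p.2; omega
  · intro h; exact absurd (Finset.mem_univ _) h

lemma mulw {n : ℕ} (m : Matrix (Fin (2*n)) (Fin (2*n)) F) (i j : Fin (2*n)) :
    (m * wPerm F n) i j = m i (revF n j) := by
  rw [Matrix.mul_apply, Finset.sum_eq_single (revF n j)]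
  · rw [wPerm_apply, if_pos (by rw [revF_val]; have := j.2; omega), mul_one]
  · intro p _ hp
    rw [wPerm_apply, if_neg, mul_zero]
    intro hc
    apply hp
    apply Fin.ext
    rw [revF_val]
    have := j.2; have := p.2; omega
  · intro h; exact absurd (Finset.mem_univ _) h

lemma wmw {n : ℕ} (m : Matrix (Fin (2*n)) (Fin (2*n)) F) (i j : Fin (2*n)) :
    (wPerm F n * m * wPerm F n) i j = m (revF n i) (revF n j) := by
  rw [mulw, wmul]

lemma ww {n : ℕ} (hn : 1 ≤ n) :
    wPerm F n * wPerm F n = (1 : Matrix (Fin (2*n)) (Fin (2*n)) F) := by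
  ext i j
  rw [wmul, wPerm_apply, Matrix.one_apply]
  have hi := i.2; have hj := j.2
  by_cases h : i = j
  · subst h; rw [if_pos (by rw [revF_val]; omega), if_pos rfl]
  · rw [if_neg, if_neg h]
    rw [revF_val]
    intro hc; apply h; apply Fin.ext; omega

def fsig (n k j : ℕ) : ℕ :=
  if j < 2*n - k then j
  else if j < 2*n - (k+1)/2 then 2*j + k + 1 - 2*n
  else 6*n - k - 2*j - 2

lemma sigmaPerm_apply {n k : ℕ} (i j : Fin (2*n)) :
    sigmaPerm F n k i j = if (i:ℕ) = fsig n k (j:ℕ) then 1 else 0 := rfl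

lemma fsig_lt {n k j : ℕ} (hk : k ≤ 2*n) (hj : j < 2*n) : fsig n k j < 2*n := by
  unfold fsig; split_ifs <;> omega

lemma fsig_mono {n k i j : ℕ} (hk : k ≤ 2*n) (hi : i < 2*n) (hj : j < 2*n)
    (h : MyRel (4*n-k-2) (4*n-k-1) i j) : fsig n k i < fsig n k j := by
  unfold MyRel at h; unfold fsig; split_ifs <;> omega

lemma rel_total {n k i j : ℕ} (hn : 1 ≤ n) (hk : k ≤ 2*n) (hi : i < 2*n) (hj : j < 2*n)
    (hij : i ≠ j) :
    MyRel (4*n-k-2) (4*n-k-1) i j ∨ MyRel (4*n-k-2) (4*n-k-1) j i := by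
  unfold MyRel; omega

def eσ (n k : ℕ) (hk : k ≤ 2*n) : Fin (2*n) → Fin (2*n) :=
  fun j => ⟨fsig n k (j:ℕ), fsig_lt hk j.2⟩

lemma eσ_inj {n k : ℕ} (hn : 1 ≤ n) (hk : k ≤ 2*n) : Function.Injective (eσ n k hk) := by
  intro i j h
  by_contra hne
  have hval : fsig n k (i:ℕ) = fsig n k (j:ℕ) := congrArg Fin.val h
  rcases rel_total hn hk i.2 j.2 (Fin.val_ne_of_ne hne) with hr | hr
  · have := fsig_mono hk i.2 j.2 hr; omega
  · have := fsig_mono hk j.2 i.2 hr; omega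

lemma sigmaT_mul {n k : ℕ} (hk : k ≤ 2*n) (m : Matrix (Fin (2*n)) (Fin (2*n)) F)
    (i j : Fin (2*n)) :
    ((sigmaPerm F n k)ᵀ * m) i j = m (eσ n k hk i) j := by
  rw [Matrix.mul_apply, Finset.sum_eq_single (eσ n k hk i)]
  · rw [Matrix.transpose_apply, sigmaPerm_apply,
      if_pos (show ((eσ n k hk i):ℕ) = fsig n k (i:ℕ) from rfl), one_mul]
  · intro p _ hp
    rw [Matrix.transpose_apply, sigmaPerm_apply, if_neg, zero_mul]
    intro hc; exact hp (Fin.ext hc)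
  · intro h; exact absurd (Finset.mem_univ _) h

lemma mul_sigma {n k : ℕ} (hk : k ≤ 2*n) (m : Matrix (Fin (2*n)) (Fin (2*n)) F)
    (i j : Fin (2*n)) :
    (m * sigmaPerm F n k) i j = m i (eσ n k hk j) := by
  rw [Matrix.mul_apply, Finset.sum_eq_single (eσ n k hk j)]
  · rw [sigmaPerm_apply,
      if_pos (show ((eσ n k hk j):ℕ) = fsig n k (j:ℕ) from rfl), mul_one]
  · intro q _ hq
    rw [sigmaPerm_apply, if_neg, mul_zero]
    intro hc; exact hq (Fin.ext hc)
  · intro h; exact absurd (Finset.mem_univ _) h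

end S18

/-- **Structure of the unipotent groups `L̂^k`, `Ľ^k`, `Ĺ^k` in `GL_{2n}(F)`**
(Lemma 7.1(1) of the paper and the remarks of §7.1): for `0 ≤ k ≤ 4n−2`,
`L̂^k = L^{4n−k−1} ⋉ Ľ^k`, `L̂^{k+1} = L̄^k ⋉ Ľ^k`, and
`Ĺ^k = L̄^k ⋉ L̂^k = L^{4n−k−1} ⋉ L̂^{k+1}`; moreover `Ĺ^k = w_{2n} Ĺ^{4n−1−k} w_{2n}`
for `0 ≤ k ≤ 4n−1`, and for `k ≤ 2n` the group `Ĺ^k` is the conjugate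
`σ_k⁻¹ N σ_k` of the full upper unitriangular group `N` of `GL_{2n}`. -/
theorem stmt18 (n : ℕ) (hn : 1 ≤ n) :
    (∀ k, k ≤ 4*n - 2 →
      IsSemidirectProd (Lgen F n (4*n - k - 1)) (Lcheck F n k) (Lhat F n k) ∧
      IsSemidirectProd (Lbargen F n k) (Lcheck F n k) (Lhat F n (k+1)) ∧
      IsSemidirectProd (Lbargen F n k) (Lhat F n k) (Lacute F n k) ∧
      IsSemidirectProd (Lgen F n (4*n - k - 1)) (Lhat F n (k+1)) (Lacute F n k)) ∧
    (∀ k, k ≤ 4*n - 1 → ∀ g : GL (Fin (2*n)) F,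
      g ∈ Lacute F n k ↔ ∃ h ∈ Lacute F n (4*n - 1 - k),
        (g : Matrix (Fin (2*n)) (Fin (2*n)) F) =
          wPerm F n * (h : Matrix (Fin (2*n)) (Fin (2*n)) F) * wPerm F n) ∧
    (∀ k, k ≤ 2*n → ∀ g : GL (Fin (2*n)) F,
      g ∈ Lacute F n k ↔ ∃ m : Matrix (Fin (2*n)) (Fin (2*n)) F,
        (∀ i, m i i = 1) ∧ (∀ i j : Fin (2*n), (j : ℕ) < (i : ℕ) → m i j = 0) ∧
        (g : Matrix (Fin (2*n)) (Fin (2*n)) F) =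
          (sigmaPerm F n k)ᵀ * m * sigmaPerm F n k) := by
  refine ⟨?_, ?_, ?_⟩
  · -- Part 1: the four semidirect product decompositions
    intro k hk
    have hk1 : k ≤ 4*n-1 := by omega
    refine ⟨?_, ?_, ?_, ?_⟩
    · have hN : ∀ g : GL (Fin (2*n)) F,
          g ∈ Lcheck F n k ↔ Ucond F n ((4*n-k-2)-1) (4*n-k) ↑g := by
        intro g
        rw [show (4*n-k-2)-1 = 4*n-k-3 from by omega]
        exact S18.char_Lcheck F hn hk g
      have hsd := S18.sd_upper F (n := n) (a := 4*n-k-2) (b := 4*n-k) (by omega)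
        (Lcheck F n k) (Lhat F n k) hN (fun g => S18.char_Lhat F hn hk1 g)
      rw [show (4*n-k-2)+1 = 4*n-k-1 from by omega] at hsd
      exact hsd
    · have hN : ∀ g : GL (Fin (2*n)) F,
          g ∈ Lcheck F n k ↔ Ucond F n (4*n-k-3) ((4*n-k-1)+1) ↑g := by
        intro g
        rw [show (4*n-k-1)+1 = 4*n-k from by omega]
        exact S18.char_Lcheck F hn hk g
      have hW : ∀ g : GL (Fin (2*n)) F,
          g ∈ Lhat F n (k+1) ↔ Ucond F n (4*n-k-3) (4*n-k-1) ↑g := by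
        intro g
        rw [show (4*n-k-3 : ℕ) = 4*n-(k+1)-2 from by omega,
          show (4*n-k-1 : ℕ) = 4*n-(k+1) from by omega]
        exact S18.char_Lhat F hn (by omega) g
      have hsd := S18.sd_lower F (n := n) (a := 4*n-k-3) (b := 4*n-k-1) (by omega) (by omega)
        (Lcheck F n k) (Lhat F n (k+1)) hN hW
      rw [show 4*n-1-(4*n-k-1) = k from by omega] at hsd
      exact hsd
    · have hN : ∀ g : GL (Fin (2*n)) F,
          g ∈ Lhat F n k ↔ Ucond F n (4*n-k-2) ((4*n-k-1)+1) ↑g := by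
        intro g
        rw [show (4*n-k-1)+1 = 4*n-k from by omega]
        exact S18.char_Lhat F hn hk1 g
      have hsd := S18.sd_lower F (n := n) (a := 4*n-k-2) (b := 4*n-k-1) (by omega) (by omega)
        (Lhat F n k) (Lacute F n k) hN (fun g => S18.char_Lacute F hn hk1 g)
      rw [show 4*n-1-(4*n-k-1) = k from by omega] at hsd
      exact hsd
    · have hN : ∀ g : GL (Fin (2*n)) F,
          g ∈ Lhat F n (k+1) ↔ Ucond F n ((4*n-k-2)-1) (4*n-k-1) ↑g := by
        intro g
        rw [show (4*n-k-2)-1 = 4*n-(k+1)-2 from by omega,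
          show (4*n-k-1 : ℕ) = 4*n-(k+1) from by omega]
        exact S18.char_Lhat F hn (by omega) g
      have hsd := S18.sd_upper F (n := n) (a := 4*n-k-2) (b := 4*n-k-1) (by omega)
        (Lhat F n (k+1)) (Lacute F n k) hN (fun g => S18.char_Lacute F hn hk1 g)
      rw [show (4*n-k-2)+1 = 4*n-k-1 from by omega] at hsd
      exact hsd
  · -- Part 2: conjugation by w
    intro k hk g
    rw [S18.char_Lacute F hn hk g]
    have hk2 : 4*n-1-k ≤ 4*n-1 := by omega
    constructor
    · intro hg
      set wU : GL (Fin (2*n)) F := ⟨wPerm F n, wPerm F n, S18.ww F hn, S18.ww F hn⟩ with hwU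
      have hval : (↑(wU * g * wU) : Matrix (Fin (2*n)) (Fin (2*n)) F)
          = wPerm F n * (↑g : Matrix (Fin (2*n)) (Fin (2*n)) F) * wPerm F n := by
        rw [Units.val_mul, Units.val_mul]
      refine ⟨wU * g * wU, ?_, ?_⟩
      · rw [S18.char_Lacute F hn hk2, hval]
        constructor
        · intro i; rw [S18.wmw]; exact hg.1 _
        · intro i j hij hr
          rw [S18.wmw]
          have hi := i.2; have hj := j.2
          have hij' : S18.revF n i ≠ S18.revF n j := by
            intro hq; apply hij; apply Fin.ext
            have h2 := congrArg Fin.val hq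
            rw [S18.revF_val, S18.revF_val] at h2
            omega
          apply hg.2 _ _ hij'
          rw [S18.revF_val, S18.revF_val]
          unfold S18.MyRel at hr ⊢
          omega
      · rw [hval]
        have e : wPerm F n * (wPerm F n * (↑g : Matrix (Fin (2*n)) (Fin (2*n)) F) *
            wPerm F n) * wPerm F n
            = (wPerm F n * wPerm F n) * (↑g : Matrix (Fin (2*n)) (Fin (2*n)) F) *
              (wPerm F n * wPerm F n) := by noncomm_ring
        rw [e, S18.ww F hn, one_mul, mul_one]
    · rintro ⟨h, hh, hgeq⟩
      rw [S18.char_Lacute F hn hk2] at hh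
      rw [hgeq]
      constructor
      · intro i; rw [S18.wmw]; exact hh.1 _
      · intro i j hij hr
        rw [S18.wmw]
        have hi := i.2; have hj := j.2
        have hij' : S18.revF n i ≠ S18.revF n j := by
          intro hq; apply hij; apply Fin.ext
          have h2 := congrArg Fin.val hq
          rw [S18.revF_val, S18.revF_val] at h2
          omega
        apply hh.2 _ _ hij'
        rw [S18.revF_val, S18.revF_val]
        unfold S18.MyRel at hr ⊢
        omega
  · -- Part 3: conjugate of the unitriangular group by sigma
    intro k hk g
    rw [S18.char_Lacute F hn (by omega) g]
    constructor
    · intro hg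
      have hbij : Function.Bijective (S18.eσ n k hk) :=
        ⟨S18.eσ_inj hn hk, Finite.surjective_of_injective (S18.eσ_inj hn hk)⟩
      set e : Fin (2*n) ≃ Fin (2*n) := Equiv.ofBijective _ hbij with he
      have hesymm : ∀ p, S18.eσ n k hk (e.symm p) = p := fun p => e.apply_symm_apply p
      refine ⟨fun p q => (↑g : Matrix (Fin (2*n)) (Fin (2*n)) F) (e.symm p) (e.symm q),
        fun p => hg.1 _, ?_, ?_⟩
      · intro p q hlt
        by_cases hpq : e.symm p = e.symm q
        · exfalso
          have h3 : p = q := by rw [← hesymm p, ← hesymm q, hpq]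
          have h4 := congrArg Fin.val h3
          omega
        apply hg.2 _ _ hpq
        intro hr
        have hmono := S18.fsig_mono hk (e.symm p).2 (e.symm q).2 hr
        have h1 : S18.fsig n k ((e.symm p):ℕ) = (p:ℕ) := congrArg Fin.val (hesymm p)
        have h2 : S18.fsig n k ((e.symm q):ℕ) = (q:ℕ) := congrArg Fin.val (hesymm q)
        omega
      · ext i j
        rw [S18.mul_sigma F hk, S18.sigmaT_mul F hk
          (m := fun p q => (↑g : Matrix (Fin (2*n)) (Fin (2*n)) F) (e.symm p) (e.symm q))]
        have h1 : e.symm (S18.eσ n k hk i) = i := e.symm_apply_apply i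
        have h2 : e.symm (S18.eσ n k hk j) = j := e.symm_apply_apply j
        show (↑g : Matrix (Fin (2*n)) (Fin (2*n)) F) i j
          = (↑g : Matrix (Fin (2*n)) (Fin (2*n)) F)
            (e.symm (S18.eσ n k hk i)) (e.symm (S18.eσ n k hk j))
        rw [h1, h2]
    · rintro ⟨m, hm1, hm2, hgeq⟩
      constructor
      · intro i
        rw [hgeq, S18.mul_sigma F hk, S18.sigmaT_mul F hk]
        exact hm1 _
      · intro i j hij hr
        rw [hgeq, S18.mul_sigma F hk, S18.sigmaT_mul F hk]
        apply hm2
        rcases S18.rel_total hn hk i.2 j.2 (Fin.val_ne_of_ne hij) with h | h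
        · exact absurd h hr
        · exact S18.fsig_mono hk j.2 i.2 h
end

section
/- Let X = N N^t ⊆ GL_{2n} where N is the upper unitriangular group (every element of X is uniquely n n̄ with n ∈ N, n̄ ∈ N^t), fix t ∈ T (diagonal torus) and define Ψ_t on X by Ψ_t(n n̄) = ψ_N(t n t^{-1}) ψ_N^{-1}(n̄^t), where ψ_N is the standard non-degenerate character. Then: (a) Ψ_t(m n̄) = Ψ_t(m) Ψ_t(n̄) for all m ∈ X, n̄ ∈ N^t; (b) for every k = 0,…,4n−1 the restriction of Ψ_t to the subgroup L̂^k (which is contained in X) is a group character of L̂^k. -/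
open Matrix Finset

variable (p : ℕ) [Fact p.Prime]

/-- `L^k`, as a subset of `GL_{2n}(ℚ_[p])` (cf. §7.1 of the paper). -/
def LgenQ (n k : ℕ) : Set (GL (Fin (2*n)) ℚ_[p]) :=
  {g | (∀ i : Fin (2*n), (g : Matrix (Fin (2*n)) (Fin (2*n)) ℚ_[p]) i i = 1) ∧
    ∀ i j : Fin (2*n), i ≠ j →
      ¬((i : ℕ) < (j : ℕ) ∧ (i : ℕ) + (j : ℕ) + 2 = k + 1) →
      (g : Matrix (Fin (2*n)) (Fin (2*n)) ℚ_[p]) i j = 0}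

/-- `L̄^k = w_{2n} L^k w_{2n}`. -/
def LbargenQ (n k : ℕ) : Set (GL (Fin (2*n)) ℚ_[p]) :=
  {g | (∀ i : Fin (2*n), (g : Matrix (Fin (2*n)) (Fin (2*n)) ℚ_[p]) i i = 1) ∧
    ∀ i j : Fin (2*n), i ≠ j →
      ¬((j : ℕ) < (i : ℕ) ∧ (i : ℕ) + (j : ℕ) + 2 + k = 4*n + 1) →
      (g : Matrix (Fin (2*n)) (Fin (2*n)) ℚ_[p]) i j = 0}

/-- `L̂^k = ⟨L^0,…,L^{4n−k−1}, L̄^0,…,L̄^{k−1}⟩`. -/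
noncomputable def LhatQ (n k : ℕ) : Subgroup (GL (Fin (2*n)) ℚ_[p]) :=
  Subgroup.closure
    ({g | ∃ l, l < 4*n - k ∧ g ∈ LgenQ p n l} ∪ {g | ∃ l, l < k ∧ g ∈ LbargenQ p n l})

/-- Upper unitriangular matrices. -/
def IsUniUpper {n : ℕ} (m : Matrix (Fin n) (Fin n) ℚ_[p]) : Prop :=
  (∀ i, m i i = 1) ∧ ∀ i j : Fin n, (j : ℕ) < (i : ℕ) → m i j = 0

/-- Lower unitriangular matrices. -/
def IsUniLower {n : ℕ} (m : Matrix (Fin n) (Fin n) ℚ_[p]) : Prop :=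
  (∀ i, m i i = 1) ∧ ∀ i j : Fin n, (i : ℕ) < (j : ℕ) → m i j = 0


section MSuppSec
variable {F : Type*} [CommRing F] {N2 : ℕ}

/-- `N` is supported on the relation `R`. -/
def MSupp (R : Fin N2 → Fin N2 → Prop) (N : Matrix (Fin N2) (Fin N2) F) : Prop :=
  ∀ i j, ¬ R i j → N i j = 0

lemma msupp_mono {R R' : Fin N2 → Fin N2 → Prop} (h : ∀ i j, R i j → R' i j)
    {N : Matrix (Fin N2) (Fin N2) F} (hN : MSupp R N) : MSupp R' N :=
  fun i j hij => hN i j fun hr => hij (h i j hr)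

lemma msupp_add {R : Fin N2 → Fin N2 → Prop} {N M : Matrix (Fin N2) (Fin N2) F}
    (hN : MSupp R N) (hM : MSupp R M) : MSupp R (N + M) := by
  intro i j h; simp [Matrix.add_apply, hN i j h, hM i j h]

lemma msupp_neg {R : Fin N2 → Fin N2 → Prop} {N : Matrix (Fin N2) (Fin N2) F}
    (hN : MSupp R N) : MSupp R (-N) := by
  intro i j h; simp [Matrix.neg_apply, hN i j h]

lemma msupp_sum {R : Fin N2 → Fin N2 → Prop} {ι : Type*} {s : Finset ι}
    {f : ι → Matrix (Fin N2) (Fin N2) F} (h : ∀ m ∈ s, MSupp R (f m)) :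
    MSupp R (∑ m ∈ s, f m) := by
  intro i j hij
  rw [Matrix.sum_apply]
  exact Finset.sum_eq_zero fun m hm => h m hm i j hij

lemma msupp_mul {R₁ R₂ R₃ : Fin N2 → Fin N2 → Prop}
    (hc : ∀ i m j, R₁ i m → R₂ m j → R₃ i j)
    {N M : Matrix (Fin N2) (Fin N2) F} (hN : MSupp R₁ N) (hM : MSupp R₂ M) :
    MSupp R₃ (N * M) := by
  intro i j hij
  rw [Matrix.mul_apply]
  refine Finset.sum_eq_zero fun m _ => ?_
  by_cases h1 : N i m = 0
  · simp [h1]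
  by_cases h2 : M m j = 0
  · simp [h2]
  exact absurd (hc i m j (by by_contra hR; exact h1 (hN i m hR))
    (by by_contra hR; exact h2 (hM m j hR))) hij

lemma msupp_eq_zero {R : Fin N2 → Fin N2 → Prop} (hR : ∀ i j, ¬ R i j)
    {N : Matrix (Fin N2) (Fin N2) F} (hN : MSupp R N) : N = 0 := by
  ext i j; exact hN i j (hR i j)

lemma msupp_pow {R : ℕ → Fin N2 → Fin N2 → Prop}
    (hc : ∀ d₁ d₂ i m j, R d₁ i m → R d₂ m j → R (d₁+d₂) i j)
    {d : ℕ} {N : Matrix (Fin N2) (Fin N2) F} (hN : MSupp (R d) N) :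
    ∀ m : ℕ, MSupp (R ((m+1)*d)) (N ^ (m+1)) := by
  intro m
  induction m with
  | zero => simpa using hN
  | succ m ih =>
      have : N ^ (m+1+1) = N ^ (m+1) * N := pow_succ N (m+1)
      rw [this]
      have := msupp_mul (R₃ := R ((m+1)*d + d)) (fun i mm j h1 h2 => hc _ _ i mm j h1 h2) ih hN
      have heq : (m+1)*d + d = (m+1+1)*d := by ring
      rwa [heq] at this

/-- Geometric-series inverse of a unitriangular-type matrix, with support control. -/
lemma geom_inv {R : ℕ → Fin N2 → Fin N2 → Prop}
    (hc : ∀ d₁ d₂ i m j, R d₁ i m → R d₂ m j → R (d₁+d₂) i j)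
    (hmono : ∀ (d' d : ℕ) (i j : Fin N2), d' ≤ d → R d i j → R d' i j)
    {D : ℕ} (hD : 2 ≤ D) (hvan : ∀ i j, ¬ R D i j)
    {d : ℕ} (hd : 1 ≤ d) {N : Matrix (Fin N2) (Fin N2) F} (hN : MSupp (R d) N) :
    ∃ C, MSupp (R d) C ∧ MSupp (R (d+d)) (C + N) ∧
      (1+N)*(1+C) = 1 ∧ (1+C)*(1+N) = 1 := by
  set X : Matrix (Fin N2) (Fin N2) F := -N with hX
  have hXsupp : MSupp (R d) X := msupp_neg hN
  have hpow : ∀ m : ℕ, MSupp (R ((m+1)*d)) (X ^ (m+1)) := msupp_pow hc hXsupp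
  have hXD : X ^ D = 0 := by
    obtain ⟨D', rfl⟩ : ∃ D', D = D' + 1 := ⟨D - 1, by omega⟩
    refine msupp_eq_zero hvan (msupp_mono (fun i j h => hmono _ _ i j ?_ h) (hpow D'))
    calc D' + 1 ≤ (D'+1)*1 := by omega
    _ ≤ (D'+1)*d := Nat.mul_le_mul_left _ hd
  set C : Matrix (Fin N2) (Fin N2) F := (∑ m ∈ range D, X ^ m) - 1 with hC
  have hsplit : ∑ m ∈ range D, X ^ m = 1 + X + ∑ m ∈ Ico 2 D, X ^ m := by
    rw [Finset.range_eq_Ico, Finset.sum_eq_sum_Ico_succ_bot (by omega : 0 < D),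
      Finset.sum_eq_sum_Ico_succ_bot (by omega : 1 < D)]
    simp [add_assoc]
  have hCX : C = X + ∑ m ∈ Ico 2 D, X ^ m := by
    rw [hC, hsplit]; abel
  have htail : MSupp (R (d+d)) (∑ m ∈ Ico 2 D, X ^ m) := by
    refine msupp_sum fun m hm => ?_
    simp only [Finset.mem_Ico] at hm
    obtain ⟨m', rfl⟩ : ∃ m', m = m' + 1 := ⟨m - 1, by omega⟩
    refine msupp_mono (fun i j h => hmono _ _ i j ?_ h) (hpow m')
    have : 2 ≤ m' + 1 := hm.1
    calc d + d ≤ (m'+1)*d := by nlinarith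
    _ = (m'+1)*d := rfl
  have hCsupp : MSupp (R d) C := by
    rw [hCX]
    exact msupp_add hXsupp (msupp_mono (fun i j h => hmono _ _ i j (by omega) h) htail)
  have hCN : MSupp (R (d+d)) (C + N) := by
    have : C + N = ∑ m ∈ Ico 2 D, X ^ m := by rw [hCX, hX]; abel
    rwa [this]
  have h1 : (1+N)*(1+C) = 1 := by
    have hgeo := mul_geom_sum X D
    have h1C : (1 + C) = ∑ m ∈ range D, X ^ m := by rw [hC]; abel
    have hNX : (1 + N) = -(X - 1) := by rw [hX]; abel
    rw [h1C, hNX, neg_mul, hgeo, hXD]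
    abel
  have h2 : (1+C)*(1+N) = 1 := by
    have hgeo := geom_sum_mul X D
    have h1C : (1 + C) = ∑ m ∈ range D, X ^ m := by rw [hC]; abel
    have hNX : (1 + N) = -(X - 1) := by rw [hX]; abel
    rw [h1C, hNX, mul_neg, hgeo, hXD]
    abel
  exact ⟨C, hCsupp, hCN, h1, h2⟩

end MSuppSec

section Rel
variable (n k : ℕ)

def Prel (i j : Fin (2*n)) : Prop := (i:ℕ) < j ∧ (i:ℕ) + (j:ℕ) + 2 + k ≤ 4*n
def Qrel (i j : Fin (2*n)) : Prop := (j:ℕ) < i ∧ 4*n + 2 ≤ (i:ℕ) + (j:ℕ) + 2 + k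
def hfun (x : Fin (2*n)) : ℤ := min (x:ℤ) (4*(n:ℤ) - k - 1 - x)
def PD (d : ℕ) (i j : Fin (2*n)) : Prop := Prel n k i j ∧ hfun n k i + d ≤ hfun n k j
def QD (d : ℕ) (i j : Fin (2*n)) : Prop := Qrel n k i j ∧ hfun n k i + d ≤ hfun n k j
def PQD (d : ℕ) (i j : Fin (2*n)) : Prop :=
  (Prel n k i j ∨ Qrel n k i j) ∧ hfun n k i + d ≤ hfun n k j

instance (i j : Fin (2*n)) : Decidable (Prel n k i j) := inferInstanceAs (Decidable (_ ∧ _))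
instance (i j : Fin (2*n)) : Decidable (Qrel n k i j) := inferInstanceAs (Decidable (_ ∧ _))

variable {n k}

lemma hgrade {i j : Fin (2*n)} (h : Prel n k i j ∨ Qrel n k i j) :
    hfun n k i + 1 ≤ hfun n k j := by
  have hi := i.2; have hj := j.2
  simp only [Prel, Qrel, hfun] at *
  omega

lemma prel_comp {i m j : Fin (2*n)} (h1 : Prel n k i m) (h2 : Prel n k m j) : Prel n k i j := by
  simp only [Prel] at *; omega

lemma qrel_comp {i m j : Fin (2*n)} (h1 : Qrel n k i m) (h2 : Qrel n k m j) : Qrel n k i j := by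
  simp only [Qrel] at *; omega

lemma pqrel_comp {i m j : Fin (2*n)} (h1 : Prel n k i m ∨ Qrel n k i m)
    (h2 : Prel n k m j ∨ Qrel n k m j) : Prel n k i j ∨ Qrel n k i j := by
  simp only [Prel, Qrel] at *; omega

lemma pd_comp : ∀ (d₁ d₂ : ℕ) (i m j : Fin (2*n)), PD n k d₁ i m → PD n k d₂ m j →
    PD n k (d₁+d₂) i j := by
  intro d₁ d₂ i m j ⟨h1, hd1⟩ ⟨h2, hd2⟩
  exact ⟨prel_comp h1 h2, by push_cast; omega⟩

lemma qd_comp : ∀ (d₁ d₂ : ℕ) (i m j : Fin (2*n)), QD n k d₁ i m → QD n k d₂ m j →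
    QD n k (d₁+d₂) i j := by
  intro d₁ d₂ i m j ⟨h1, hd1⟩ ⟨h2, hd2⟩
  exact ⟨qrel_comp h1 h2, by push_cast; omega⟩

lemma pqd_comp : ∀ (d₁ d₂ : ℕ) (i m j : Fin (2*n)), PQD n k d₁ i m → PQD n k d₂ m j →
    PQD n k (d₁+d₂) i j := by
  intro d₁ d₂ i m j ⟨h1, hd1⟩ ⟨h2, hd2⟩
  exact ⟨pqrel_comp h1 h2, by push_cast; omega⟩

lemma pd_mono : ∀ (d' d : ℕ) (i j : Fin (2*n)), d' ≤ d → PD n k d i j → PD n k d' i j := by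
  intro d' d i j hle ⟨h, hd⟩; exact ⟨h, by omega⟩
lemma qd_mono : ∀ (d' d : ℕ) (i j : Fin (2*n)), d' ≤ d → QD n k d i j → QD n k d' i j := by
  intro d' d i j hle ⟨h, hd⟩; exact ⟨h, by omega⟩
lemma pqd_mono : ∀ (d' d : ℕ) (i j : Fin (2*n)), d' ≤ d → PQD n k d i j → PQD n k d' i j := by
  intro d' d i j hle ⟨h, hd⟩; exact ⟨h, by omega⟩

lemma depth_vanish (hk : k + 1 ≤ 4*n) {d : ℕ} (hd : 4*n+1 ≤ d) (i j : Fin (2*n)) :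
    ¬ (hfun n k i + d ≤ hfun n k j) := by
  have hi := i.2; have hj := j.2
  simp only [hfun]
  omega

lemma pd_van (hk : k + 1 ≤ 4*n) : ∀ i j : Fin (2*n), ¬ PD n k (4*n+1) i j :=
  fun i j h => depth_vanish hk le_rfl i j h.2
lemma qd_van (hk : k + 1 ≤ 4*n) : ∀ i j : Fin (2*n), ¬ QD n k (4*n+1) i j :=
  fun i j h => depth_vanish hk le_rfl i j h.2
lemma pqd_van (hk : k + 1 ≤ 4*n) : ∀ i j : Fin (2*n), ¬ PQD n k (4*n+1) i j :=
  fun i j h => depth_vanish hk le_rfl i j h.2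

end Rel

section Decomp
variable {F : Type*} [CommRing F] {n k : ℕ}

lemma pd_le_pqd (d : ℕ) (i j : Fin (2*n)) : PD n k d i j → PQD n k d i j :=
  fun ⟨h, hd⟩ => ⟨Or.inl h, hd⟩
lemma qd_le_pqd (d : ℕ) (i j : Fin (2*n)) : QD n k d i j → PQD n k d i j :=
  fun ⟨h, hd⟩ => ⟨Or.inr h, hd⟩

lemma decompAux (hk : k + 1 ≤ 4*n) :
    ∀ (m d : ℕ), 1 ≤ d → 4*n+1 ≤ d + m →
    ∀ g : Matrix (Fin (2*n)) (Fin (2*n)) F, MSupp (PQD n k d) (g - 1) →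
    ∃ a b, MSupp (PD n k d) (a - 1) ∧ MSupp (QD n k d) (b - 1) ∧ g = a * b := by
  intro m
  induction m with
  | zero =>
      intro d hd hD g hg
      have : g - 1 = 0 := by
        refine msupp_eq_zero (fun i j h => ?_) hg
        exact pqd_van hk i j (pqd_mono _ _ i j (by omega) h)
      refine ⟨1, 1, ?_, ?_, by rw [mul_one]; linear_combination (norm := abel) this⟩ <;>
        · intro i j h; simp
  | succ m ih =>
      intro d hd hD g hg
      set A : Matrix (Fin (2*n)) (Fin (2*n)) F :=
        Matrix.of (fun i j => if Prel n k i j then (g - 1) i j else 0) with hA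
      set B : Matrix (Fin (2*n)) (Fin (2*n)) F :=
        Matrix.of (fun i j => if Qrel n k i j then (g - 1) i j else 0) with hB
      have hAsupp : MSupp (PD n k d) A := by
        intro i j h
        by_cases hP : Prel n k i j
        · have : ¬ PQD n k d i j := fun ⟨_, hdep⟩ => h ⟨hP, hdep⟩
          have h0 := hg i j this
          rw [Matrix.sub_apply] at h0
          simp [hA, Matrix.of_apply, hP, h0]
        · simp [hA, Matrix.of_apply, hP]
      have hBsupp : MSupp (QD n k d) B := by
        intro i j h
        by_cases hP : Qrel n k i j
        · have : ¬ PQD n k d i j := fun ⟨_, hdep⟩ => h ⟨hP, hdep⟩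
          have h0 := hg i j this
          rw [Matrix.sub_apply] at h0
          simp [hB, Matrix.of_apply, hP, h0]
        · simp [hB, Matrix.of_apply, hP]
      have hGAB : g - 1 = A + B := by
        ext i j
        by_cases hP : Prel n k i j
        · have hQ : ¬ Qrel n k i j := by simp only [Prel, Qrel] at *; omega
          simp [hA, hB, Matrix.add_apply, hP, hQ]
        · by_cases hQ : Qrel n k i j
          · simp [hA, hB, Matrix.add_apply, hP, hQ]
          · have : ¬ PQD n k d i j := fun ⟨hor, _⟩ => by tauto
            simp [hA, hB, Matrix.add_apply, hP, hQ, hg i j this]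
      obtain ⟨CA, hCA, hCAA, haCA, hCAa⟩ :=
        geom_inv pd_comp pd_mono (D := 4*n+1) (by omega) (pd_van hk) hd hAsupp
      obtain ⟨CB, hCB, hCBB, hbCB, hCBb⟩ :=
        geom_inv qd_comp qd_mono (D := 4*n+1) (by omega) (qd_van hk) hd hBsupp
      set a : Matrix (Fin (2*n)) (Fin (2*n)) F := 1 + A with ha
      set b : Matrix (Fin (2*n)) (Fin (2*n)) F := 1 + B with hb
      set g' : Matrix (Fin (2*n)) (Fin (2*n)) F := (1 + CA) * g * (1 + CB) with hg'
      have hgform : g = 1 + (A + B) := by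
        linear_combination (norm := abel) hGAB
      have hexp : g' - 1 = (CA + A) + (CB + B) +
          (CA*(A+B) + CA*CB + (A+B)*CB + CA*(A+B)*CB + CA*(A+B)*CB*0) := by
        rw [hg', hgform]
        noncomm_ring
      have hg'supp : MSupp (PQD n k (d+1)) (g' - 1) := by
        rw [hexp]
        have mono2 : ∀ (N : Matrix (Fin (2*n)) (Fin (2*n)) F),
            MSupp (PQD n k (d+d)) N → MSupp (PQD n k (d+1)) N :=
          fun N h => msupp_mono (fun i j => pqd_mono _ _ i j (by omega)) h
        have hApq : MSupp (PQD n k d) A := msupp_mono (pd_le_pqd d) hAsupp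
        have hBpq : MSupp (PQD n k d) B := msupp_mono (qd_le_pqd d) hBsupp
        have hCApq : MSupp (PQD n k d) CA := msupp_mono (pd_le_pqd d) hCA
        have hCBpq : MSupp (PQD n k d) CB := msupp_mono (qd_le_pqd d) hCB
        have hABpq : MSupp (PQD n k d) (A + B) := msupp_add hApq hBpq
        have t1 : MSupp (PQD n k (d+1)) (CA + A) :=
          mono2 _ (msupp_mono (pd_le_pqd (d+d)) hCAA)
        have t2 : MSupp (PQD n k (d+1)) (CB + B) :=
          mono2 _ (msupp_mono (qd_le_pqd (d+d)) hCBB)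
        have t3 : MSupp (PQD n k (d+1)) (CA*(A+B)) :=
          mono2 _ (msupp_mul (pqd_comp d d) hCApq hABpq)
        have t4 : MSupp (PQD n k (d+1)) (CA*CB) :=
          mono2 _ (msupp_mul (pqd_comp d d) hCApq hCBpq)
        have t5 : MSupp (PQD n k (d+1)) ((A+B)*CB) :=
          mono2 _ (msupp_mul (pqd_comp d d) hABpq hCBpq)
        have t6 : MSupp (PQD n k (d+1)) (CA*(A+B)*CB) :=
          msupp_mono (fun i j => pqd_mono (d+1) (d+d+d) i j (by omega))
            (msupp_mul (pqd_comp (d+d) d) (msupp_mul (pqd_comp d d) hCApq hABpq) hCBpq)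
        have t7 : MSupp (PQD n k (d+1)) (CA*(A+B)*CB*0) := by
          rw [mul_zero]; intro i j _; simp
        exact msupp_add (msupp_add t1 t2)
          (msupp_add (msupp_add (msupp_add (msupp_add t3 t4) t5) t6) t7)
      obtain ⟨a₂, b₂, ha₂, hb₂, hg'eq⟩ := ih (d+1) (by omega) (by omega) g' hg'supp
      refine ⟨a * a₂, b₂ * b, ?_, ?_, ?_⟩
      · have : a * a₂ - 1 = A + (a₂ - 1) + A * (a₂ - 1) := by
          rw [ha]; noncomm_ring
        rw [this]
        have h1 : MSupp (PD n k d) (a₂ - 1) :=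
          msupp_mono (fun i j => pd_mono d (d+1) i j (by omega)) ha₂
        exact msupp_add (msupp_add hAsupp h1)
          (msupp_mono (fun i j => pd_mono d (d+d) i j (by omega))
            (msupp_mul (pd_comp d d) hAsupp h1))
      · have : b₂ * b - 1 = (b₂ - 1) + B + (b₂ - 1) * B := by
          rw [hb]; noncomm_ring
        rw [this]
        have h1 : MSupp (QD n k d) (b₂ - 1) :=
          msupp_mono (fun i j => qd_mono d (d+1) i j (by omega)) hb₂
        exact msupp_add (msupp_add h1 hBsupp)
          (msupp_mono (fun i j => qd_mono d (d+d) i j (by omega))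
            (msupp_mul (qd_comp d d) h1 hBsupp))
      · have key : a * g' * b = g := by
          rw [hg']
          calc a * ((1 + CA) * g * (1 + CB)) * b
              = (a * (1 + CA)) * g * ((1 + CB) * b) := by noncomm_ring
          _ = g := by rw [ha, hb, haCA, hCBb, one_mul, mul_one]
        calc g = a * g' * b := key.symm
        _ = a * (a₂ * b₂) * b := by rw [hg'eq]
        _ = a * a₂ * (b₂ * b) := by noncomm_ring

/-- depth-1 products stay depth-1, unitriangular version -/
lemma pd1_mul {x y : Matrix (Fin (2*n)) (Fin (2*n)) F}
    (hx : MSupp (PD n k 1) (x - 1)) (hy : MSupp (PD n k 1) (y - 1)) :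
    MSupp (PD n k 1) (x * y - 1) := by
  have h : x * y - 1 = (x - 1) + (y - 1) + (x - 1) * (y - 1) := by noncomm_ring
  rw [h]
  exact msupp_add (msupp_add hx hy)
    (msupp_mono (fun i j => pd_mono 1 2 i j (by omega)) (msupp_mul (pd_comp 1 1) hx hy))

lemma qd1_mul {x y : Matrix (Fin (2*n)) (Fin (2*n)) F}
    (hx : MSupp (QD n k 1) (x - 1)) (hy : MSupp (QD n k 1) (y - 1)) :
    MSupp (QD n k 1) (x * y - 1) := by
  have h : x * y - 1 = (x - 1) + (y - 1) + (x - 1) * (y - 1) := by noncomm_ring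
  rw [h]
  exact msupp_add (msupp_add hx hy)
    (msupp_mono (fun i j => qd_mono 1 2 i j (by omega)) (msupp_mul (qd_comp 1 1) hx hy))

lemma pq_of_prod {a b : Matrix (Fin (2*n)) (Fin (2*n)) F}
    (ha : MSupp (PD n k 1) (a - 1)) (hb : MSupp (QD n k 1) (b - 1)) :
    MSupp (PQD n k 1) (a * b - 1) := by
  have h : a * b - 1 = (a - 1) + (b - 1) + (a - 1) * (b - 1) := by noncomm_ring
  rw [h]
  have hapq : MSupp (PQD n k 1) (a - 1) := msupp_mono (pd_le_pqd 1) ha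
  have hbpq : MSupp (PQD n k 1) (b - 1) := msupp_mono (qd_le_pqd 1) hb
  exact msupp_add (msupp_add hapq hbpq)
    (msupp_mono (fun i j => pqd_mono 1 2 i j (by omega)) (msupp_mul (pqd_comp 1 1) hapq hbpq))

lemma qp_swap_supp {b a : Matrix (Fin (2*n)) (Fin (2*n)) F}
    (hb : MSupp (QD n k 1) (b - 1)) (ha : MSupp (PD n k 1) (a - 1)) :
    MSupp (PQD n k 1) (b * a - 1) := by
  have h : b * a - 1 = (b - 1) + (a - 1) + (b - 1) * (a - 1) := by noncomm_ring
  rw [h]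
  have hapq : MSupp (PQD n k 1) (a - 1) := msupp_mono (pd_le_pqd 1) ha
  have hbpq : MSupp (PQD n k 1) (b - 1) := msupp_mono (qd_le_pqd 1) hb
  exact msupp_add (msupp_add hbpq hapq)
    (msupp_mono (fun i j => pqd_mono 1 2 i j (by omega)) (msupp_mul (pqd_comp 1 1) hbpq hapq))

/-- `(a*b) i i' = a i i'` for adjacent indices, structured decompositions. -/
lemma prod_entry_up {a b : Matrix (Fin (2*n)) (Fin (2*n)) F}
    (ha : MSupp (PD n k 1) (a - 1)) (hb : MSupp (QD n k 1) (b - 1))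
    {i i' : Fin (2*n)} (h : (i:ℕ) + 1 = (i':ℕ)) : (a*b) i i' = a i i' := by
  have hne : i ≠ i' := Fin.ne_of_val_ne (by omega)
  have hexp : a * b = 1 + ((a-1) + ((b-1) + (a-1)*(b-1))) := by noncomm_ring
  have hB : (b - 1) i i' = 0 := hb i i' (fun ⟨⟨hq, _⟩, _⟩ => by omega)
  have hAB : ((a-1)*(b-1)) i i' = 0 := by
    have hsup := msupp_mul (R₃ := fun x y => ∃ m, PD n k 1 x m ∧ QD n k 1 m y)
      (fun x m y h1 h2 => ⟨m, h1, h2⟩) ha hb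
    refine hsup i i' ?_
    rintro ⟨m, ⟨⟨hm1, hm2⟩, -⟩, ⟨⟨hm3, hm4⟩, -⟩⟩
    omega
  rw [hexp]
  simp only [Matrix.add_apply, Matrix.one_apply_ne hne, hB, hAB, Matrix.sub_apply,
    Matrix.one_apply_ne hne]
  ring

lemma prod_entry_dn {a b : Matrix (Fin (2*n)) (Fin (2*n)) F}
    (ha : MSupp (PD n k 1) (a - 1)) (hb : MSupp (QD n k 1) (b - 1))
    {i i' : Fin (2*n)} (h : (i:ℕ) + 1 = (i':ℕ)) : (a*b) i' i = b i' i := by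
  have hne : i' ≠ i := Fin.ne_of_val_ne (by omega)
  have hexp : a * b = 1 + ((b-1) + ((a-1) + (a-1)*(b-1))) := by noncomm_ring
  have hA : (a - 1) i' i = 0 := ha i' i (fun ⟨⟨hq, _⟩, _⟩ => by omega)
  have hAB : ((a-1)*(b-1)) i' i = 0 := by
    have hsup := msupp_mul (R₃ := fun x y => ∃ m, PD n k 1 x m ∧ QD n k 1 m y)
      (fun x m y h1 h2 => ⟨m, h1, h2⟩) ha hb
    refine hsup i' i ?_
    rintro ⟨m, ⟨⟨hm1, hm2⟩, -⟩, ⟨⟨hm3, hm4⟩, -⟩⟩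
    omega
  rw [hexp]
  simp only [Matrix.add_apply, Matrix.one_apply_ne hne, hA, hAB, Matrix.sub_apply,
    Matrix.one_apply_ne hne]
  ring

lemma add_entry_up {g₁ g₂ : Matrix (Fin (2*n)) (Fin (2*n)) F}
    (h₁ : MSupp (PQD n k 1) (g₁ - 1)) (h₂ : MSupp (PQD n k 1) (g₂ - 1))
    {i i' : Fin (2*n)} (h : (i:ℕ) + 1 = (i':ℕ)) :
    (g₁ * g₂) i i' = g₁ i i' + g₂ i i' := by
  have hne : i ≠ i' := Fin.ne_of_val_ne (by omega)
  have hexp : g₁ * g₂ = 1 + ((g₁-1) + ((g₂-1) + (g₁-1)*(g₂-1))) := by noncomm_ring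
  have hAB : ((g₁-1)*(g₂-1)) i i' = 0 := by
    have hsup := msupp_mul (R₃ := fun x y => ∃ m, PQD n k 1 x m ∧ PQD n k 1 m y)
      (fun x m y hh1 hh2 => ⟨m, hh1, hh2⟩) h₁ h₂
    refine hsup i i' ?_
    rintro ⟨m, ⟨hm1, -⟩, ⟨hm2, -⟩⟩
    rcases hm1 with hm1 | hm1 <;> rcases hm2 with hm2 | hm2 <;>
      simp only [Prel, Qrel] at hm1 hm2 <;> omega
  rw [hexp]
  simp only [Matrix.add_apply, Matrix.one_apply_ne hne, hAB, Matrix.sub_apply,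
    Matrix.one_apply_ne hne]
  ring

lemma add_entry_dn {g₁ g₂ : Matrix (Fin (2*n)) (Fin (2*n)) F}
    (h₁ : MSupp (PQD n k 1) (g₁ - 1)) (h₂ : MSupp (PQD n k 1) (g₂ - 1))
    {i i' : Fin (2*n)} (h : (i:ℕ) + 1 = (i':ℕ)) :
    (g₁ * g₂) i' i = g₁ i' i + g₂ i' i := by
  have hne : i' ≠ i := Fin.ne_of_val_ne (by omega)
  have hexp : g₁ * g₂ = 1 + ((g₁-1) + ((g₂-1) + (g₁-1)*(g₂-1))) := by noncomm_ring
  have hAB : ((g₁-1)*(g₂-1)) i' i = 0 := by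
    have hsup := msupp_mul (R₃ := fun x y => ∃ m, PQD n k 1 x m ∧ PQD n k 1 m y)
      (fun x m y hh1 hh2 => ⟨m, hh1, hh2⟩) h₁ h₂
    refine hsup i' i ?_
    rintro ⟨m, ⟨hm1, -⟩, ⟨hm2, -⟩⟩
    rcases hm1 with hm1 | hm1 <;> rcases hm2 with hm2 | hm2 <;>
      simp only [Prel, Qrel] at hm1 hm2 <;> omega
  rw [hexp]
  simp only [Matrix.add_apply, Matrix.one_apply_ne hne, hAB, Matrix.sub_apply,
    Matrix.one_apply_ne hne]
  ring

end Decomp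

section PLayer
variable {n k : ℕ}

lemma upper_of_pd {a : Matrix (Fin (2*n)) (Fin (2*n)) ℚ_[p]}
    (ha : MSupp (PD n k 1) (a - 1)) : IsUniUpper p a := by
  constructor
  · intro i
    have h0 := ha i i (fun ⟨⟨h1, _⟩, _⟩ => lt_irrefl _ h1)
    rw [Matrix.sub_apply, Matrix.one_apply_eq] at h0
    exact sub_eq_zero.mp h0
  · intro i j hij
    have hne : i ≠ j := Fin.ne_of_val_ne (by omega)
    have h0 := ha i j (fun ⟨⟨h1, _⟩, _⟩ => by omega)
    rwa [Matrix.sub_apply, Matrix.one_apply_ne hne, sub_zero] at h0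

lemma lower_of_qd {b : Matrix (Fin (2*n)) (Fin (2*n)) ℚ_[p]}
    (hb : MSupp (QD n k 1) (b - 1)) : IsUniLower p b := by
  constructor
  · intro i
    have h0 := hb i i (fun ⟨⟨h1, _⟩, _⟩ => lt_irrefl _ h1)
    rw [Matrix.sub_apply, Matrix.one_apply_eq] at h0
    exact sub_eq_zero.mp h0
  · intro i j hij
    have hne : i ≠ j := Fin.ne_of_val_ne (by omega)
    have h0 := hb i j (fun ⟨⟨h1, _⟩, _⟩ => by omega)
    rwa [Matrix.sub_apply, Matrix.one_apply_ne hne, sub_zero] at h0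

lemma uniupper_one {m : ℕ} : IsUniUpper p (1 : Matrix (Fin m) (Fin m) ℚ_[p]) :=
  ⟨fun i => Matrix.one_apply_eq i,
   fun i j h => Matrix.one_apply_ne (Fin.ne_of_val_ne (by omega))⟩

def Rlow {m : ℕ} (i j : Fin m) : Prop := (j:ℕ) < (i:ℕ)

lemma msupp_of_lower {m : ℕ} {b : Matrix (Fin m) (Fin m) ℚ_[p]} (hb : IsUniLower p b) :
    MSupp Rlow (b - 1) := by
  intro i j h
  rcases eq_or_ne i j with rfl | hne
  · rw [Matrix.sub_apply, hb.1, Matrix.one_apply_eq, sub_self]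
  · have hv : (i:ℕ) ≠ (j:ℕ) := fun e => hne (Fin.ext e)
    have hlt : (i:ℕ) < (j:ℕ) := by simp only [Rlow] at h; omega
    rw [Matrix.sub_apply, hb.2 i j hlt, Matrix.one_apply_ne hne, sub_zero]

lemma lower_of_msupp {m : ℕ} {b : Matrix (Fin m) (Fin m) ℚ_[p]}
    (hb : MSupp Rlow (b - 1)) : IsUniLower p b := by
  constructor
  · intro i
    have h0 := hb i i (by simp [Rlow])
    rw [Matrix.sub_apply, Matrix.one_apply_eq] at h0
    exact sub_eq_zero.mp h0
  · intro i j hij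
    have hne : i ≠ j := Fin.ne_of_val_ne (by omega)
    have h0 := hb i j (by simp only [Rlow]; omega)
    rwa [Matrix.sub_apply, Matrix.one_apply_ne hne, sub_zero] at h0

lemma lower_mul {m : ℕ} {b c : Matrix (Fin m) (Fin m) ℚ_[p]}
    (hb : IsUniLower p b) (hc : IsUniLower p c) : IsUniLower p (b * c) := by
  refine lower_of_msupp p ?_
  have h : b * c - 1 = (b - 1) + (c - 1) + (b - 1) * (c - 1) := by noncomm_ring
  rw [h]
  have hb' := msupp_of_lower p hb
  have hc' := msupp_of_lower p hc
  exact msupp_add (msupp_add hb' hc')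
    (msupp_mul (R₃ := Rlow) (fun i mm j h1 h2 => by simp only [Rlow] at *; omega) hb' hc')

lemma low_entry {m : ℕ} {b c : Matrix (Fin m) (Fin m) ℚ_[p]}
    (hb : IsUniLower p b) (hc : IsUniLower p c)
    {i i' : Fin m} (h : (i:ℕ) + 1 = (i':ℕ)) : (b*c) i' i = b i' i + c i' i := by
  have hne : i' ≠ i := Fin.ne_of_val_ne (by omega)
  have hexp : b * c = 1 + ((b-1) + ((c-1) + (b-1)*(c-1))) := by noncomm_ring
  have hBC : ((b-1)*(c-1)) i' i = 0 := by
    have hsup := msupp_mul (R₃ := fun x y => ∃ mm, Rlow x mm ∧ Rlow mm y)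
      (fun x mm y h1 h2 => ⟨mm, h1, h2⟩) (msupp_of_lower p hb) (msupp_of_lower p hc)
    refine hsup i' i ?_
    rintro ⟨mm, h1, h2⟩
    simp only [Rlow] at h1 h2
    omega
  rw [hexp]
  simp only [Matrix.add_apply, Matrix.one_apply_ne hne, hBC, Matrix.sub_apply]
  ring

/-- weighted superdiagonal sum -/
noncomputable def SuT (n : ℕ) (t : Fin (2*n) → ℚ_[p]ˣ) (g : Matrix (Fin (2*n)) (Fin (2*n)) ℚ_[p]) : ℚ_[p] :=
  ∑ j : Fin (2*n-1),
    ((t ⟨j.1, by have := j.2; omega⟩ / t ⟨j.1+1, by have := j.2; omega⟩ : ℚ_[p]ˣ) : ℚ_[p]) *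
      g ⟨j.1, by have := j.2; omega⟩ ⟨j.1+1, by have := j.2; omega⟩

/-- subdiagonal sum -/
noncomputable def SdT (n : ℕ) (g : Matrix (Fin (2*n)) (Fin (2*n)) ℚ_[p]) : ℚ_[p] :=
  ∑ j : Fin (2*n-1), g ⟨j.1+1, by have := j.2; omega⟩ ⟨j.1, by have := j.2; omega⟩

lemma SuT_prod {t : Fin (2*n) → ℚ_[p]ˣ} {a b : Matrix (Fin (2*n)) (Fin (2*n)) ℚ_[p]}
    (ha : MSupp (PD n k 1) (a - 1)) (hb : MSupp (QD n k 1) (b - 1)) :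
    SuT p n t (a * b) = SuT p n t a :=
  Finset.sum_congr rfl fun j _ => by rw [prod_entry_up ha hb rfl]

lemma SdT_prod {a b : Matrix (Fin (2*n)) (Fin (2*n)) ℚ_[p]}
    (ha : MSupp (PD n k 1) (a - 1)) (hb : MSupp (QD n k 1) (b - 1)) :
    SdT p n (a * b) = SdT p n b :=
  Finset.sum_congr rfl fun j _ => by rw [prod_entry_dn ha hb rfl]

lemma SuT_add {t : Fin (2*n) → ℚ_[p]ˣ} {g₁ g₂ : Matrix (Fin (2*n)) (Fin (2*n)) ℚ_[p]}
    (h₁ : MSupp (PQD n k 1) (g₁ - 1)) (h₂ : MSupp (PQD n k 1) (g₂ - 1)) :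
    SuT p n t (g₁ * g₂) = SuT p n t g₁ + SuT p n t g₂ := by
  rw [SuT, SuT, SuT, ← Finset.sum_add_distrib]
  exact Finset.sum_congr rfl fun j _ => by rw [add_entry_up h₁ h₂ rfl, mul_add]

lemma SdT_add {g₁ g₂ : Matrix (Fin (2*n)) (Fin (2*n)) ℚ_[p]}
    (h₁ : MSupp (PQD n k 1) (g₁ - 1)) (h₂ : MSupp (PQD n k 1) (g₂ - 1)) :
    SdT p n (g₁ * g₂) = SdT p n g₁ + SdT p n g₂ := by
  rw [SdT, SdT, SdT, ← Finset.sum_add_distrib]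
  exact Finset.sum_congr rfl fun j _ => add_entry_dn h₁ h₂ rfl

lemma SuT_one {t : Fin (2*n) → ℚ_[p]ˣ} : SuT p n t 1 = 0 := by
  refine Finset.sum_eq_zero fun j _ => ?_
  rw [Matrix.one_apply_ne (by simp [Fin.ext_iff]), mul_zero]

lemma SdT_lowmul {b c : Matrix (Fin (2*n)) (Fin (2*n)) ℚ_[p]}
    (hb : IsUniLower p b) (hc : IsUniLower p c) :
    SdT p n (b * c) = SdT p n b + SdT p n c := by
  rw [SdT, SdT, SdT, ← Finset.sum_add_distrib]
  exact Finset.sum_congr rfl fun j _ => low_entry p hb hc rfl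

/-- the structured decomposition of any element of `L̂ᵏ` -/
lemma lhat_struct {n k : ℕ} (hk : k + 1 ≤ 4*n) :
    ∀ g ∈ LhatQ p n k, ∃ a b : Matrix (Fin (2*n)) (Fin (2*n)) ℚ_[p],
      MSupp (PD n k 1) (a - 1) ∧ MSupp (QD n k 1) (b - 1) ∧
      (g : Matrix (Fin (2*n)) (Fin (2*n)) ℚ_[p]) = a * b := by
  intro g hg
  unfold LhatQ at hg
  refine Subgroup.closure_induction
    (p := fun (x : GL (Fin (2*n)) ℚ_[p]) _ => ∃ a b : Matrix (Fin (2*n)) (Fin (2*n)) ℚ_[p],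
      MSupp (PD n k 1) (a - 1) ∧ MSupp (QD n k 1) (b - 1) ∧
      (x : Matrix (Fin (2*n)) (Fin (2*n)) ℚ_[p]) = a * b) ?_ ?_ ?_ ?_ hg
  · rintro x (⟨l, hl, hx⟩ | ⟨l, hl, hx⟩) <;>
      simp only [LgenQ, LbargenQ, Set.mem_setOf_eq] at hx
    · refine ⟨(x : Matrix (Fin (2*n)) (Fin (2*n)) ℚ_[p]), 1, ?_, ?_, (mul_one _).symm⟩
      · intro i j hnot
        rw [Matrix.sub_apply]
        rcases eq_or_ne i j with rfl | hij
        · rw [hx.1 i, Matrix.one_apply_eq, sub_self]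
        · rw [Matrix.one_apply_ne hij, sub_zero]
          refine hx.2 i j hij ?_
          rintro ⟨hlt, heq⟩
          have hP : Prel n k i j := ⟨hlt, by omega⟩
          exact hnot ⟨hP, hgrade (Or.inl hP)⟩
      · intro i j _; simp
    · refine ⟨1, (x : Matrix (Fin (2*n)) (Fin (2*n)) ℚ_[p]), ?_, ?_, (one_mul _).symm⟩
      · intro i j _; simp
      · intro i j hnot
        rw [Matrix.sub_apply]
        rcases eq_or_ne i j with rfl | hij
        · rw [hx.1 i, Matrix.one_apply_eq, sub_self]
        · rw [Matrix.one_apply_ne hij, sub_zero]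
          refine hx.2 i j hij ?_
          rintro ⟨hlt, heq⟩
          have hQ : Qrel n k i j := ⟨hlt, by omega⟩
          exact hnot ⟨hQ, hgrade (Or.inr hQ)⟩
  · exact ⟨1, 1, by intro i j _; simp, by intro i j _; simp, by simp⟩
  · rintro x y hxm hym ⟨a₁, b₁, ha₁, hb₁, he₁⟩ ⟨a₂, b₂, ha₂, hb₂, he₂⟩
    obtain ⟨a', b', ha', hb', heq⟩ :=
      decompAux hk (4*n) 1 le_rfl (by omega) (b₁ * a₂) (qp_swap_supp hb₁ ha₂)
    refine ⟨a₁ * a', b' * b₂, pd1_mul ha₁ ha', qd1_mul hb' hb₂, ?_⟩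
    calc (↑(x*y) : Matrix (Fin (2*n)) (Fin (2*n)) ℚ_[p]) = ↑x * ↑y :=
          Matrix.GeneralLinearGroup.coe_mul x y
    _ = (a₁ * b₁) * (a₂ * b₂) := by rw [he₁, he₂]
    _ = a₁ * (b₁ * a₂) * b₂ := by noncomm_ring
    _ = a₁ * (a' * b') * b₂ := by rw [heq]
    _ = (a₁ * a') * (b' * b₂) := by noncomm_ring
  · rintro x hxm ⟨a, b, ha, hb, he⟩
    obtain ⟨CA, hCA, -, haCA, -⟩ :=
      geom_inv (F := ℚ_[p]) pd_comp pd_mono (D := 4*n+1) (by omega) (pd_van hk) le_rfl ha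
    obtain ⟨CB, hCB, -, hbCB, -⟩ :=
      geom_inv (F := ℚ_[p]) qd_comp qd_mono (D := 4*n+1) (by omega) (qd_van hk) le_rfl hb
    have hairw : (1 : Matrix (Fin (2*n)) (Fin (2*n)) ℚ_[p]) + (a - 1) = a := by abel
    have hbirw : (1 : Matrix (Fin (2*n)) (Fin (2*n)) ℚ_[p]) + (b - 1) = b := by abel
    rw [hairw] at haCA
    rw [hbirw] at hbCB
    set Z : Matrix (Fin (2*n)) (Fin (2*n)) ℚ_[p] := (1 + CB) * (1 + CA) with hZ
    have hZ1 : (↑x : Matrix (Fin (2*n)) (Fin (2*n)) ℚ_[p]) * Z = 1 := by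
      rw [he, hZ]
      calc (a * b) * ((1 + CB) * (1 + CA)) = a * (b * (1 + CB)) * (1 + CA) := by noncomm_ring
      _ = 1 := by rw [hbCB, mul_one, haCA]
    have hZsupp : MSupp (PQD n k 1) (Z - 1) := by
      have hexp : Z - 1 = CB + CA + CB * CA := by rw [hZ]; noncomm_ring
      rw [hexp]
      have hCApq : MSupp (PQD n k 1) CA := msupp_mono (pd_le_pqd 1) hCA
      have hCBpq : MSupp (PQD n k 1) CB := msupp_mono (qd_le_pqd 1) hCB
      exact msupp_add (msupp_add hCBpq hCApq)
        (msupp_mono (fun i j => pqd_mono 1 2 i j (by omega))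
          (msupp_mul (pqd_comp 1 1) hCBpq hCApq))
    have hinv : ((x⁻¹ : GL (Fin (2*n)) ℚ_[p]) : Matrix (Fin (2*n)) (Fin (2*n)) ℚ_[p]) = Z := by
      have hx1 : ((x⁻¹ : GL (Fin (2*n)) ℚ_[p]) : Matrix (Fin (2*n)) (Fin (2*n)) ℚ_[p]) *
          ((x : GL (Fin (2*n)) ℚ_[p]) : Matrix (Fin (2*n)) (Fin (2*n)) ℚ_[p]) = 1 := by
        rw [← Matrix.GeneralLinearGroup.coe_mul, inv_mul_cancel,
          Matrix.GeneralLinearGroup.coe_one]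
      calc ((x⁻¹ : GL (Fin (2*n)) ℚ_[p]) : Matrix (Fin (2*n)) (Fin (2*n)) ℚ_[p])
          = ((x⁻¹ : GL (Fin (2*n)) ℚ_[p]) : Matrix (Fin (2*n)) (Fin (2*n)) ℚ_[p]) *
            (((x : GL (Fin (2*n)) ℚ_[p]) : Matrix (Fin (2*n)) (Fin (2*n)) ℚ_[p]) * Z) := by
            rw [hZ1, mul_one]
      _ = (((x⁻¹ : GL (Fin (2*n)) ℚ_[p]) : Matrix (Fin (2*n)) (Fin (2*n)) ℚ_[p]) *
            ((x : GL (Fin (2*n)) ℚ_[p]) : Matrix (Fin (2*n)) (Fin (2*n)) ℚ_[p])) * Z :=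
            (mul_assoc _ _ _).symm
      _ = Z := by rw [hx1, one_mul]
    obtain ⟨a'', b'', ha'', hb'', heq⟩ := decompAux hk (4*n) 1 le_rfl (by omega) Z hZsupp
    exact ⟨a'', b'', ha'', hb'', by rw [hinv, heq]⟩

end PLayer

/-- **Multiplicativity of `Ψ_t` on `X = N Nᵗ ⊆ GL_{2n}` and on the groups `L̂^k`**
(Lemma 7.3(2),(3) of the paper).  `Ψ_t(n n̄) = ψ_N(t n t⁻¹) ψ_N^{-1}(n̄ᵗ)`, where `ψ_N`
is the standard non-degenerate character of the upper unitriangular group.  Then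
(a) `Ψ_t(m n̄) = Ψ_t(m) Ψ_t(n̄)` for `m ∈ X` and lower unitriangular `n̄`, and
(b) for every `k = 0,…,4n−1` the group `L̂^k` is contained in `X` and the restriction of
`Ψ_t` to `L̂^k` is a group character. -/
theorem stmt19 (n : ℕ) (hn : 1 ≤ n)
    (ψ : AddChar ℚ_[p] ℂ) (hψcont : Continuous ψ) (hψnt : ψ ≠ 1)
    (t : Fin (2*n) → ℚ_[p]ˣ)
    (Ψ : Matrix (Fin (2*n)) (Fin (2*n)) ℚ_[p] → ℂ)
    (hΨ : ∀ a b : Matrix (Fin (2*n)) (Fin (2*n)) ℚ_[p],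
      IsUniUpper p a → IsUniLower p b →
      Ψ (a * b) =
        ψ (∑ j : Fin (2*n-1),
            ((t ⟨j.1, by have := j.2; omega⟩ / t ⟨j.1+1, by have := j.2; omega⟩ : ℚ_[p]ˣ) : ℚ_[p]) *
              a ⟨j.1, by have := j.2; omega⟩ ⟨j.1+1, by have := j.2; omega⟩) *
          (ψ (∑ j : Fin (2*n-1),
            b ⟨j.1+1, by have := j.2; omega⟩ ⟨j.1, by have := j.2; omega⟩))⁻¹) :
    (∀ x : Matrix (Fin (2*n)) (Fin (2*n)) ℚ_[p],
      (∃ a b, IsUniUpper p a ∧ IsUniLower p b ∧ x = a * b) →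
      ∀ c : Matrix (Fin (2*n)) (Fin (2*n)) ℚ_[p], IsUniLower p c →
        Ψ (x * c) = Ψ x * Ψ c) ∧
    (∀ k, k ≤ 4*n - 1 →
      (∀ g ∈ LhatQ p n k, ∃ a b, IsUniUpper p a ∧ IsUniLower p b ∧
        (g : Matrix (Fin (2*n)) (Fin (2*n)) ℚ_[p]) = a * b) ∧
      (∀ g₁ ∈ LhatQ p n k, ∀ g₂ ∈ LhatQ p n k,
        Ψ ((g₁ : Matrix (Fin (2*n)) (Fin (2*n)) ℚ_[p]) *
            (g₂ : Matrix (Fin (2*n)) (Fin (2*n)) ℚ_[p])) =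
          Ψ (g₁ : Matrix (Fin (2*n)) (Fin (2*n)) ℚ_[p]) *
            Ψ (g₂ : Matrix (Fin (2*n)) (Fin (2*n)) ℚ_[p]))) := by
  constructor
  · rintro x ⟨a, b, hu, hl, rfl⟩ c hc
    have hΨ' : ∀ a b : Matrix (Fin (2*n)) (Fin (2*n)) ℚ_[p], IsUniUpper p a → IsUniLower p b →
        Ψ (a * b) = ψ (SuT p n t a) * (ψ (SdT p n b))⁻¹ := hΨ
    have h1 : Ψ (a * b * c) = ψ (SuT p n t a) * (ψ (SdT p n (b * c)))⁻¹ := by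
      rw [mul_assoc]; exact hΨ' a (b * c) hu (lower_mul p hl hc)
    have h2 := hΨ' a b hu hl
    have h3 : Ψ c = ψ (SuT p n t 1) * (ψ (SdT p n c))⁻¹ := by
      have h := hΨ' 1 c (uniupper_one p) hc
      rwa [one_mul] at h
    rw [h1, h2, h3, SuT_one, AddChar.map_zero_eq_one, SdT_lowmul p hl hc,
      AddChar.map_add_eq_mul, mul_inv]
    ring
  · intro k hk
    have hk4 : k + 1 ≤ 4*n := by omega
    have hΨ' : ∀ a b : Matrix (Fin (2*n)) (Fin (2*n)) ℚ_[p], IsUniUpper p a → IsUniLower p b →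
        Ψ (a * b) = ψ (SuT p n t a) * (ψ (SdT p n b))⁻¹ := hΨ
    have val : ∀ g a b : Matrix (Fin (2*n)) (Fin (2*n)) ℚ_[p],
        MSupp (PD n k 1) (a - 1) → MSupp (QD n k 1) (b - 1) →
        g = a * b → Ψ g = ψ (SuT p n t g) * (ψ (SdT p n g))⁻¹ := by
      rintro g a b ha hb rfl
      rw [hΨ' a b (upper_of_pd p ha) (lower_of_qd p hb), SuT_prod p ha hb, SdT_prod p ha hb]
    constructor
    · intro g hg
      obtain ⟨a, b, ha, hb, he⟩ := lhat_struct p hk4 g hg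
      exact ⟨a, b, upper_of_pd p ha, lower_of_qd p hb, he⟩
    · intro g₁ h₁ g₂ h₂
      obtain ⟨a₁, b₁, ha₁, hb₁, he₁⟩ := lhat_struct p hk4 g₁ h₁
      obtain ⟨a₂, b₂, ha₂, hb₂, he₂⟩ := lhat_struct p hk4 g₂ h₂
      obtain ⟨a₃, b₃, ha₃, hb₃, he₃⟩ := lhat_struct p hk4 (g₁ * g₂) (mul_mem h₁ h₂)
      rw [Matrix.GeneralLinearGroup.coe_mul] at he₃
      have hpq₁ : MSupp (PQD n k 1)
          ((g₁ : Matrix (Fin (2*n)) (Fin (2*n)) ℚ_[p]) - 1) := by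
        rw [he₁]; exact pq_of_prod ha₁ hb₁
      have hpq₂ : MSupp (PQD n k 1)
          ((g₂ : Matrix (Fin (2*n)) (Fin (2*n)) ℚ_[p]) - 1) := by
        rw [he₂]; exact pq_of_prod ha₂ hb₂
      rw [val _ a₃ b₃ ha₃ hb₃ he₃, val _ a₁ b₁ ha₁ hb₁ he₁, val _ a₂ b₂ ha₂ hb₂ he₂,
        SuT_add p hpq₁ hpq₂, SdT_add p hpq₁ hpq₂, AddChar.map_add_eq_mul,
        AddChar.map_add_eq_mul, mul_inv]
      ring
end
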